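/- arXiv:2602.20919 — 7 statements merged into one kernel-verified Lean document; each statement's English description precedes it below -/
import Mathlib

section
/- Let F be a field of characteristic 0 or characteristic p > n, let ξ ∈ F be nonzero, and let a_1, ..., a_n ∈ F. Set P(x) = ∏_{j=1}^n (1 - ξ a_j x). If the coefficient of x^k in P(x)^n is 0 for all 1 ≤ k ≤ n-1, then the elementary symmetric polynomials e_k(a_1, ..., a_n) vanish for all 1 ≤ k ≤ n-1; consequently ∏_{i=1}^n (x - a_i) = x^n + (-1)^n e_n(a_1,...,a_n). -/
/-!
Write `P = 1 + R`. If `X ^ k ∣ R` with `k ≥ 1`, then `P ^ n ≡ 1 + n R` modulo `R ^ 2`, hence modulo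
`X ^ (2 k)`, so the coefficient of `x ^ k` in `P ^ n` is `n` times that in `P`. As `n` is invertible,
induction on `k` gives `P ≡ 1` modulo `X ^ n`. The coefficient of `x ^ k` in `P` is `(-ξ) ^ k e_k`,
so `e_k = 0` for `0 < k < n`, and Vieta's formula for `∏ (x - a_i)` keeps only its two extreme terms.
-/

open Finset Polynomial

section

variable {ι R : Type*} [CommRing R]

theorem Finset.sum_powersetCard_prod_mul_left (s : Finset ι) (c : R) (b : ι → R) (k : ℕ) :
    ∑ t ∈ s.powersetCard k, ∏ i ∈ t, c * b i = c ^ k * ∑ t ∈ s.powersetCard k, ∏ i ∈ t, b i := by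
  rw [mul_sum]
  refine sum_congr rfl fun t ht => ?_
  rw [← (mem_powersetCard.mp ht).2, pow_card_mul_prod]

theorem coeff_prod_one_add_C_mul_X (s : Finset ι) (b : ι → R) (k : ℕ) :
    (∏ i ∈ s, (1 + C (b i) * X)).coeff k = ∑ t ∈ s.powersetCard k, ∏ i ∈ t, b i := by
  classical
  simp_rw [prod_one_add, prod_mul_distrib, prod_const, ← map_prod, finsetSum_coeff,
    coeff_C_mul_X_pow, powersetCard_eq_filter, sum_filter, eq_comm]

theorem coeff_prod_one_sub_C_mul_X (s : Finset ι) (b : ι → R) (k : ℕ) :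
    (∏ i ∈ s, (1 - C (b i) * X)).coeff k = (-1) ^ k * ∑ t ∈ s.powersetCard k, ∏ i ∈ t, b i := by
  simp_rw [← sum_powersetCard_prod_mul_left, neg_one_mul, ← coeff_prod_one_add_C_mul_X, map_neg,
    neg_mul, sub_eq_add_neg]

theorem coeff_pow_of_X_pow_dvd_sub_one {Q : R[X]} {k : ℕ} (hk : 0 < k) (hQ : X ^ k ∣ Q - 1)
    (n : ℕ) : (Q ^ n).coeff k = n * Q.coeff k := by
  obtain ⟨S, hS⟩ := sq_dvd_add_pow_sub_sub (Q - 1) 1 n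
  have hQn : Q ^ n = 1 + (Q - 1) * n + (Q - 1) ^ 2 * S := by
    rw [← hS]; ring
  have hsq : ((Q - 1) ^ 2 * S).coeff k = 0 := by
    refine X_pow_dvd_iff.mp (dvd_mul_of_dvd_left ?_ S) k (by omega : k < k * 2)
    rw [pow_mul]; exact pow_dvd_pow_of_dvd hQ 2
  rw [hQn, coeff_add, coeff_add, hsq, coeff_mul_natCast, coeff_sub, coeff_one,
    if_neg hk.ne', sub_zero, zero_add, add_zero, mul_comm]

theorem X_pow_dvd_sub_one_of_coeff_pow_eq_zero [NoZeroDivisors R] {Q : R[X]} {n : ℕ}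
    (hn : (n : R) ≠ 0) (hQ : Q.coeff 0 = 1) :
    ∀ m, (∀ k, 1 ≤ k → k ≤ m → (Q ^ n).coeff k = 0) → X ^ (m + 1) ∣ Q - 1
  | 0, _ => by simp [X_dvd_iff, hQ]
  | m + 1, h => by
    have hdvd := X_pow_dvd_sub_one_of_coeff_pow_eq_zero hn hQ m
      fun k hk hkm => h k hk (by omega)
    have hcoeff : (Q - 1).coeff (m + 1) = 0 := by
      have := h (m + 1) (by omega) le_rfl
      rw [coeff_pow_of_X_pow_dvd_sub_one (by omega) hdvd] at this
      simpa [hn, coeff_one] using this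
    refine X_pow_dvd_iff.mpr fun j hj => ?_
    rcases Nat.lt_succ_iff_lt_or_eq.mp hj with hj | rfl
    · exact X_pow_dvd_iff.mp hdvd j hj
    · exact hcoeff

theorem prod_X_sub_C_eq_X_pow_add_C (s : Finset ι) (a : ι → R) {n : ℕ} (hn : 0 < n)
    (hs : #s = n)
    (h : ∀ k, 1 ≤ k → k ≤ n - 1 → ∑ t ∈ s.powersetCard k, ∏ i ∈ t, a i = 0) :
    ∏ i ∈ s, (X - C (a i)) = X ^ n + C ((-1) ^ n * ∑ t ∈ s.powersetCard n, ∏ i ∈ t, a i) := by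
  have hvieta := Multiset.prod_X_sub_X_eq_sum_esymm (s.val.map a)
  simp only [Multiset.map_map, Function.comp_def, Multiset.card_map, card_val, hs,
    Finset.esymm_map_val] at hvieta
  obtain ⟨m, rfl⟩ : ∃ m, n = m + 1 := ⟨n - 1, by omega⟩
  rw [Finset.prod, hvieta, sum_range_succ, sum_range_succ', sum_eq_zero fun k hk => ?_]
  · simp
  · rw [h (k + 1) (by omega) (by rw [mem_range] at hk; omega)]
    simp

end

/-- if the coefficients of `x^k` in `P(x)^n` vanish for
`1 ≤ k ≤ n-1`, where `P(x) = ∏ (1 - ξ a_j x)`, then the elementary symmetric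
polynomials `e_k(a_1, …, a_n)` vanish for `1 ≤ k ≤ n-1`, and consequently
`∏ (x - a_i) = x^n + (-1)^n e_n`. -/
theorem stmt_3 (F : Type*) [Field F] (n : ℕ) (hn : 0 < n)
    (hchar : ringChar F = 0 ∨ n < ringChar F)
    (ξ : F) (hξ : ξ ≠ 0) (a : Fin n → F)
    (hcoeff : ∀ k : ℕ, 1 ≤ k → k ≤ n - 1 →
      ((∏ j, (1 - C (ξ * a j) * X)) ^ n).coeff k = 0) :
    (∀ k : ℕ, 1 ≤ k → k ≤ n - 1 →
        ∑ t ∈ Finset.univ.powersetCard k, ∏ i ∈ t, a i = 0) ∧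
      ∏ i, (X - C (a i)) =
        X ^ n + C ((-1) ^ n *
          ∑ t ∈ Finset.univ.powersetCard n, ∏ i ∈ t, a i) := by
  have hnF : (n : F) ≠ 0 := by
    rw [Ne, ringChar.spec]
    rcases hchar with h | h
    · rw [h, zero_dvd_iff]; omega
    · exact fun hd => absurd (Nat.le_of_dvd hn hd) (by omega)
  have hP0 : (∏ j, (1 - C (ξ * a j) * X)).coeff 0 = 1 := by
    rw [coeff_prod_one_sub_C_mul_X]; simp
  have hdvd := X_pow_dvd_sub_one_of_coeff_pow_eq_zero hnF hP0 (n - 1) hcoeff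
  rw [Nat.sub_add_cancel hn] at hdvd
  have hesymm : ∀ k, 1 ≤ k → k ≤ n - 1 → ∑ t ∈ univ.powersetCard k, ∏ i ∈ t, a i = 0 := by
    intro k hk hkn
    have hPk := X_pow_dvd_iff.mp hdvd k (by omega)
    rw [coeff_sub, coeff_one, if_neg (by omega), sub_zero, coeff_prod_one_sub_C_mul_X,
      sum_powersetCard_prod_mul_left] at hPk
    simpa [hξ] using hPk
  exact ⟨hesymm, prod_X_sub_C_eq_X_pow_add_C _ _ hn (card_fin n) hesymm⟩
end

section
/- Let p be a prime and g a primitive root modulo p (a generator of F_p^*). Let A = {g^j : 0 ≤ j ≤ (p-3)/2}. Then A/A = F_p^* \ {-1} = (F_p^* - 1) \ {0}. In particular, the full multiplicative group G = F_p^* admits a ratio set representation (G - 1) \ {0} = A/A. -/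
/-!
Write `A = {g ^ j : j ≤ n}` with `g` of order `2 (n + 1)`. Then `A / A = {g ^ i : |i| ≤ n}`, and
modulo `2 (n + 1)` the exponents `-n, …, n` hit every residue except `n + 1`. So `A / A` is the
whole cyclic group except `g ^ (n + 1)`, which in a field is the unique element of order two, `-1`.
-/

open Pointwise

section Group

variable {G : Type*} [Group G]

theorem exists_pow_lt_orderOf_eq_of_mem_zpowers {g x : G} (hg : IsOfFinOrder g)
    (hx : x ∈ Subgroup.zpowers g) : ∃ m < orderOf g, g ^ m = x := by
  obtain ⟨m, rfl⟩ := hg.mem_powers_iff_mem_zpowers.mpr hx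
  exact ⟨m % orderOf g, Nat.mod_lt _ hg.orderOf_pos, pow_mod_orderOf g m⟩

theorem pow_image_Iic_div_self {g : G} {n : ℕ} (hg : orderOf g = 2 * (n + 1)) :
    (g ^ ·) '' Set.Iic n / (g ^ ·) '' Set.Iic n =
      (Subgroup.zpowers g : Set G) \ {g ^ (n + 1)} := by
  ext x
  constructor
  · rintro ⟨_, ⟨j, hj, rfl⟩, _, ⟨k, hk, rfl⟩, rfl⟩
    simp only [Set.mem_Iic] at hj hk
    refine ⟨div_mem (Subgroup.npow_mem_zpowers g j) (Subgroup.npow_mem_zpowers g k), fun h ↦ ?_⟩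
    have hjk : g ^ j = g ^ (n + 1 + k) := by
      rw [pow_add, ← Set.mem_singleton_iff.mp h, div_mul_cancel]
    have := pow_injOn_Iio_orderOf (x := g) (by rw [Set.mem_Iio]; omega)
      (by rw [Set.mem_Iio]; omega) hjk
    omega
  · rintro ⟨hx, hne⟩
    obtain ⟨m, hm, rfl⟩ :=
      exists_pow_lt_orderOf_eq_of_mem_zpowers (orderOf_pos_iff.mp (by omega)) hx
    rcases le_or_gt m n with hmn | hmn
    · exact ⟨g ^ m, ⟨m, hmn, rfl⟩, 1, ⟨0, Nat.zero_le n, pow_zero g⟩, div_one _⟩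
    · have hm1 : m ≠ n + 1 := by rintro rfl; exact hne rfl
      refine ⟨g ^ (m - (n + 2)), ⟨_, Set.mem_Iic.mpr (by omega), rfl⟩, g ^ n,
        ⟨n, Set.mem_Iic.mpr le_rfl, rfl⟩, ?_⟩
      -- `(m - (n + 2)) + 2 (n + 1) = m + n`
      rw [div_eq_iff_eq_mul, ← pow_add, show m + n = m - (n + 2) + orderOf g by omega, pow_add,
        pow_orderOf_eq_one, mul_one]

end Group

theorem pow_eq_neg_one_of_orderOf_eq_two_mul {R : Type*} [CommRing R] [NoZeroDivisors R] {ζ : R}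
    {m : ℕ} (hm : m ≠ 0) (hζ : orderOf ζ = 2 * m) : ζ ^ m = -1 := by
  have h := (hζ ▸ IsPrimitiveRoot.orderOf ζ).pow_of_dvd hm (dvd_mul_left m 2)
  rw [Nat.mul_div_cancel _ (Nat.pos_of_ne_zero hm)] at h
  exact h.eq_neg_one_of_two_right

theorem setOf_ne_zero_ne_neg_one_eq {R : Type*} [Ring R] :
    {x : R | x ≠ 0 ∧ x ≠ -1} = {x | ∃ y : R, y ≠ 0 ∧ x = y - 1} \ {0} := by
  ext x
  simp only [Set.mem_ofPred_eq, Set.mem_sdiff, Set.mem_singleton_iff]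
  constructor
  · rintro ⟨hx0, hx1⟩
    exact ⟨⟨x + 1, fun h ↦ hx1 (eq_neg_of_add_eq_zero_left h), (add_sub_cancel_right x 1).symm⟩,
      hx0⟩
  · rintro ⟨⟨y, hy, rfl⟩, h0⟩
    exact ⟨h0, fun h ↦ hy (by simpa using h)⟩

theorem Units.pow_image_Iic_div_self_of_forall_mem_zpowers {K : Type*} [Field K] {g : Kˣ} {n : ℕ}
    (hgen : ∀ x : Kˣ, x ∈ Subgroup.zpowers g) (hg : orderOf g = 2 * (n + 1)) :
    ((g : K) ^ ·) '' Set.Iic n / ((g : K) ^ ·) '' Set.Iic n = {x : K | x ≠ 0 ∧ x ≠ -1} := by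
  have hneg : ((g ^ (n + 1) : Kˣ) : K) = -1 := by
    rw [Units.val_pow_eq_pow_val]
    exact pow_eq_neg_one_of_orderOf_eq_two_mul n.succ_ne_zero (by rw [orderOf_units, hg])
  have himage : ((g : K) ^ ·) '' Set.Iic n = Units.coeHom K '' ((g ^ ·) '' Set.Iic n) := by
    rw [Set.image_image]
    simp
  rw [himage, ← Set.image_div, pow_image_Iic_div_self hg,
    Set.image_sdiff (f := Units.coeHom K) Units.val_injective, Set.image_singleton]
  ext x
  simp only [Units.coeHom_apply, hneg, Set.mem_sdiff, Set.mem_image, SetLike.mem_coe, hgen,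
    true_and, Set.mem_singleton_iff, ne_eq, Set.mem_ofPred_eq, and_congr_left_iff]
  exact fun _ ↦ isUnit_iff_ne_zero

/-- if `g` is a primitive root mod `p` and
`A = {g^j : 0 ≤ j ≤ (p-3)/2}`, then `A/A = F_p^* \ {-1} = (F_p^* - 1) \ {0}`. -/
theorem stmt_7 (p : ℕ) [Fact p.Prime] (hodd : Odd p) (g : (ZMod p)ˣ)
    (hg : ∀ x : (ZMod p)ˣ, x ∈ Subgroup.zpowers g) :
    ({x : ZMod p | ∃ j : ℕ, j ≤ (p - 3) / 2 ∧ x = (g : ZMod p) ^ j} /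
        {x : ZMod p | ∃ j : ℕ, j ≤ (p - 3) / 2 ∧ x = (g : ZMod p) ^ j}
      = {x : ZMod p | x ≠ 0 ∧ x ≠ -1}) ∧
    ({x : ZMod p | ∃ j : ℕ, j ≤ (p - 3) / 2 ∧ x = (g : ZMod p) ^ j} /
        {x : ZMod p | ∃ j : ℕ, j ≤ (p - 3) / 2 ∧ x = (g : ZMod p) ^ j}
      = {x : ZMod p | ∃ y : ZMod p, y ≠ 0 ∧ x = y - 1} \ {0}) := by
  have hA : {x : ZMod p | ∃ j : ℕ, j ≤ (p - 3) / 2 ∧ x = (g : ZMod p) ^ j} =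
      ((g : ZMod p) ^ ·) '' Set.Iic ((p - 3) / 2) := by
    ext x
    simp [eq_comm]
  have hord : orderOf g = 2 * ((p - 3) / 2 + 1) := by
    rw [orderOf_eq_card_of_forall_mem_zpowers hg, Nat.card_eq_fintype_card, ZMod.card_units]
    obtain ⟨k, rfl⟩ := hodd
    have := (Fact.out : (2 * k + 1).Prime).two_le
    omega
  rw [hA, Units.pow_image_Iic_div_self_of_forall_mem_zpowers hg hord]
  exact ⟨rfl, setOf_ne_zero_ne_neg_one_eq⟩
end

section
/- Let p be an odd prime, let G be a proper multiplicative subgroup of F_p^* with λ ∈ G, and suppose A, B ⊆ F_p^* with |A|, |B| ≥ 2 satisfy AB = (G - λ) \ {0}. Then |A|·|B| = |G| - 1; in particular |AB| = |A|·|B| and G \ {λ} is the disjoint union of the sets λ + aB over a ∈ A. -/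
/-!
Every `λ + ab` with `a ∈ A`, `b ∈ B` lies in `G`, so `(ba + λ) ^ |G| = 1` for all `a ∈ A ∪ {0}`
and `b ∈ B`. Stepanov's method turns this into `(|A| + 1)|B| ≤ |G| + |B| - 1`: choose weights
`c_b` with `∑ c_b f(b) = f(0)` whenever `deg f < |B|` (Lagrange interpolation at `0`); then
`F = ∑_b c_b ((bX + λ)^(|G|+|B|-1) - (bX + λ)^(|B|-1))` has degree at most `|G| + |B| - 1`,
vanishes to order `|B|` at each point of `A ∪ {0}`, and is nonzero because its coefficient of
`X^|B|` is a nonzero multiple of `∑ c_b b^|B| = -∏_b (-b)`. Together with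
`|G| - 1 = |AB| ≤ |A||B|` this gives `|A||B| = |G| - 1`, so `(a, b) ↦ ab` is injective on
`A × B`, which is the disjointness of the translates `λ + aB`.
-/

open Finset Pointwise Polynomial

theorem pow_card_eq_one_of_mul_mem {M : Type*} [CommMonoidWithZero M] [IsCancelMulZero M]
    [Nontrivial M] {S : Finset M} (h0 : 0 ∉ S) (hmul : ∀ x ∈ S, ∀ y ∈ S, x * y ∈ S) {g : M}
    (hg : g ∈ S) : g ^ #S = 1 := by
  classical
  have hinj : Set.InjOn (g * ·) S := fun x _ y _ h =>
    mul_left_cancel₀ (ne_of_mem_of_not_mem hg h0) h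
  have himage : S.image (g * ·) = S :=
    eq_of_subset_of_card_le (image_subset_iff.2 fun x hx => hmul g hg x hx)
      (card_image_of_injOn hinj).ge
  have hprod : g ^ #S * ∏ x ∈ S, x = 1 * ∏ x ∈ S, x := by
    calc g ^ #S * ∏ x ∈ S, x = ∏ x ∈ S, g * x := by rw [prod_mul_distrib, prod_const]
      _ = ∏ x ∈ S.image (g * ·), x := (prod_image (f := id) hinj).symm
      _ = 1 * ∏ x ∈ S, x := by rw [himage, one_mul]
  exact mul_right_cancel₀ (prod_ne_zero_iff.2 fun x hx h => h0 (h ▸ hx)) hprod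

section FiniteSubgroup

variable {M : Type*} [CommGroupWithZero M] {S : Finset M}

theorem inv_mem_of_mul_mem (h0 : 0 ∉ S) (h1 : 1 ∈ S) (hmul : ∀ x ∈ S, ∀ y ∈ S, x * y ∈ S)
    {g : M} (hg : g ∈ S) : g⁻¹ ∈ S := by
  let T : Submonoid M :=
    { carrier := S, mul_mem' := fun ha hb => hmul _ ha _ hb, one_mem' := h1 }
  have hinv : g ^ (#S - 1) = g⁻¹ := eq_inv_of_mul_eq_one_left <| by
    rw [pow_sub_one_mul (card_ne_zero_of_mem hg), pow_card_eq_one_of_mul_mem h0 hmul hg]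
  exact hinv ▸ T.pow_mem (show g ∈ T from hg) _

theorem two_mul_card_le_of_mul_mem [Fintype M] [DecidableEq M] (h0 : 0 ∉ S) (h1 : 1 ∈ S)
    (hmul : ∀ x ∈ S, ∀ y ∈ S, x * y ∈ S) {x : M} (hx0 : x ≠ 0) (hxS : x ∉ S) :
    2 * #S ≤ Fintype.card M - 1 := by
  have hdisj : Disjoint (S.image (x * ·)) S := by
    refine disjoint_left.2 fun y hy hyS => hxS ?_
    obtain ⟨g, hg, rfl⟩ := mem_image.1 hy
    simpa [hx0, ne_of_mem_of_not_mem hg h0] using hmul _ hyS _ (inv_mem_of_mul_mem h0 h1 hmul hg)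
  have hsub : S.image (x * ·) ∪ S ⊆ univ.erase 0 := by
    intro y hy
    rcases mem_union.1 hy with hy | hy
    · obtain ⟨g, hg, rfl⟩ := mem_image.1 hy
      simpa using And.intro hx0 (ne_of_mem_of_not_mem hg h0)
    · simpa using ne_of_mem_of_not_mem hy h0
  have := card_le_card hsub
  rw [card_union_of_disjoint hdisj, card_image_of_injective _ (mul_right_injective₀ hx0),
    card_erase_of_mem (mem_univ _), card_univ] at this
  omega

end FiniteSubgroup

theorem coeff_C_mul_X_add_C_pow {R : Type*} [CommSemiring R] (v u : R) (N t : ℕ) :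
    ((C v * X + C u) ^ N).coeff t = u ^ (N - t) * N.choose t * v ^ t := by
  have : (C v * X + C u) ^ N = ((X + C u) ^ N).comp (C v * X) := by
    simp [pow_comp, add_comp]
  rw [this, comp_C_mul_X_coeff, coeff_X_add_C_pow]

theorem natDegree_C_mul_X_add_C_pow_le {R : Type*} [CommSemiring R] (v u : R) (N : ℕ) :
    ((C v * X + C u) ^ N).natDegree ≤ N := by
  simpa using natDegree_pow_le_of_le N natDegree_linear_le

theorem sum_eval_basis_mul_eval {K : Type*} [Field K] [DecidableEq K] {s : Finset K} {f : K[X]}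
    (hf : f.degree < #s) (x : K) :
    ∑ i ∈ s, (Lagrange.basis s id i).eval x * f.eval i = f.eval x := by
  conv_rhs => rw [Lagrange.eq_interpolate Function.injective_id.injOn hf]
  simp [Lagrange.interpolate_apply, eval_finsetSum, mul_comm]

section Stepanov

variable {K : Type*} [Field K] {B : Finset K} {c : K → K} {lam : K} {d : ℕ}

noncomputable def stepanovPoly (B : Finset K) (c : K → K) (lam : K) (d : ℕ) : K[X] :=
  ∑ b ∈ B, C (c b) * ((C b * X + C lam) ^ (d + (#B - 1)) - (C b * X + C lam) ^ (#B - 1))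

theorem natDegree_stepanovPoly_le : (stepanovPoly B c lam d).natDegree ≤ d + (#B - 1) := by
  refine natDegree_sum_le_of_forall_le _ _ fun b _ => (natDegree_C_mul_le _ _).trans <|
    (natDegree_sub_le _ _).trans <| max_le (natDegree_C_mul_X_add_C_pow_le _ _ _) ?_
  exact (natDegree_C_mul_X_add_C_pow_le _ _ _).trans (Nat.le_add_left _ _)

theorem coeff_stepanovPoly (t : ℕ) :
    (stepanovPoly B c lam d).coeff t = ∑ b ∈ B, c b * b ^ t *
      (lam ^ (d + (#B - 1) - t) * (d + (#B - 1)).choose t -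
        lam ^ (#B - 1 - t) * (#B - 1).choose t) := by
  simp only [stepanovPoly, finsetSum_coeff, coeff_C_mul, coeff_sub, coeff_C_mul_X_add_C_pow]
  exact sum_congr rfl fun b _ => by ring

theorem stepanovPoly_comp_X_add_C (a : K) :
    (stepanovPoly B c lam d).comp (X + C a) = ∑ b ∈ B, C (c b) *
      ((C b * X + C (b * a + lam)) ^ (d + (#B - 1)) - (C b * X + C (b * a + lam)) ^ (#B - 1)) := by
  simp only [stepanovPoly, Polynomial.sum_comp, mul_comp, sub_comp, pow_comp, add_comp, C_comp,
    X_comp, map_add, map_mul]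
  exact sum_congr rfl fun b _ => by ring

theorem coeff_stepanovPoly_comp_X_add_C {a : K} (ha : ∀ b ∈ B, (b * a + lam) ^ d = 1) {t : ℕ}
    (ht : t ≤ #B - 1) :
    ((stepanovPoly B c lam d).comp (X + C a)).coeff t =
      ((d + (#B - 1)).choose t - (#B - 1).choose t) *
        ∑ b ∈ B, c b * ((C a * X + C lam) ^ (#B - 1 - t) * X ^ t).eval b := by
  simp only [stepanovPoly_comp_X_add_C, finsetSum_coeff, coeff_C_mul, coeff_sub,
    coeff_C_mul_X_add_C_pow, mul_sum]
  refine sum_congr rfl fun b hb => ?_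
  have hexp : d + (#B - 1) - t = d + (#B - 1 - t) := by omega
  simp only [hexp, pow_add, ha b hb, one_mul, eval_mul, eval_pow, eval_add, eval_C, eval_X]
  ring

variable (hc : ∀ f : K[X], f.degree < #B → ∑ b ∈ B, c b * f.eval b = f.eval 0)
include hc

theorem X_sub_C_pow_dvd_stepanovPoly {a : K} (ha : ∀ b ∈ B, (b * a + lam) ^ d = 1) :
    (X - C a) ^ #B ∣ stepanovPoly B c lam d := by
  refine X_sub_C_pow_dvd_iff.2 <| X_pow_dvd_iff.2 fun t ht => ?_
  rw [coeff_stepanovPoly_comp_X_add_C ha (by omega)]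
  rcases Nat.eq_zero_or_pos t with rfl | htpos
  · simp
  have hdeg : ((C a * X + C lam) ^ (#B - 1 - t) * X ^ t).degree < (#B : WithBot ℕ) := by
    refine (degree_le_natDegree).trans_lt <| Nat.cast_lt.2 <| (natDegree_mul_le).trans_lt ?_
    have := natDegree_C_mul_X_add_C_pow_le a lam (#B - 1 - t)
    simp only [natDegree_X_pow]
    omega
  rw [hc _ hdeg]
  simp [zero_pow htpos.ne']

theorem sum_mul_pow_card_eq_neg_eval_nodal (hB : B.Nonempty) :
    ∑ b ∈ B, c b * b ^ #B = -(Lagrange.nodal B id).eval 0 := by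
  have hdeg : (X ^ #B - Lagrange.nodal B id).degree < (#B : WithBot ℕ) := by
    have h := Lagrange.degree_nodal (s := B) (v := id)
    rw [← degree_X_pow (R := K)] at h ⊢
    exact degree_sub_lt_left h.symm (pow_ne_zero _ X_ne_zero) (by
      rw [(monic_X_pow _).leadingCoeff, Lagrange.nodal_monic.leadingCoeff])
  have hvanish : ∑ b ∈ B, c b * (Lagrange.nodal B id).eval b = 0 :=
    sum_eq_zero fun b hb => mul_eq_zero_of_right _ (Lagrange.eval_nodal_at_node (v := id) hb)
  have := hc _ hdeg
  simpa only [eval_sub, eval_pow, eval_X, mul_sub, sum_sub_distrib, hvanish, sub_zero,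
    zero_pow (card_ne_zero.2 hB), zero_sub] using this

theorem stepanovPoly_ne_zero (hB0 : 0 ∉ B) (hB : B.Nonempty) (hlam : lam ≠ 0)
    (hchoose : ((d + (#B - 1)).choose #B : K) ≠ 0) : stepanovPoly B c lam d ≠ 0 := by
  intro hzero
  have hcoeff := coeff_stepanovPoly (B := B) (c := c) (lam := lam) (d := d) #B
  have hlt : #B - 1 < #B := Nat.sub_lt (card_pos.2 hB) one_pos
  simp only [hzero, coeff_zero, Nat.choose_eq_zero_of_lt hlt, Nat.cast_zero, mul_zero, sub_zero,
    ← sum_mul, sum_mul_pow_card_eq_neg_eval_nodal hc hB, zero_eq_mul] at hcoeff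
  have hnodal : (Lagrange.nodal B id).eval 0 ≠ 0 :=
    Lagrange.eval_nodal_not_at_node fun b hb h => hB0 (h ▸ hb)
  rcases hcoeff with h | h
  · exact hnodal (neg_eq_zero.1 h)
  · exact mul_ne_zero (pow_ne_zero _ hlam) hchoose h

theorem card_mul_card_le_of_pow_eq_one (hB0 : 0 ∉ B) (hB : B.Nonempty) (hlam : lam ≠ 0)
    (hchoose : ((d + (#B - 1)).choose #B : K) ≠ 0) {A : Finset K}
    (hA : ∀ a ∈ A, ∀ b ∈ B, (b * a + lam) ^ d = 1) :
    #A * #B ≤ d + (#B - 1) := by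
  have hdvd : ∏ a ∈ A, (X - C a) ^ #B ∣ stepanovPoly B c lam d :=
    prod_dvd_of_coprime (fun a _ a' _ hne => (pairwise_coprime_X_sub_C (s := id)
      Function.injective_id hne).pow) fun a ha => X_sub_C_pow_dvd_stepanovPoly hc (hA a ha)
  have := (natDegree_le_of_dvd hdvd (stepanovPoly_ne_zero hc hB0 hB hlam hchoose)).trans
    natDegree_stepanovPoly_le
  rw [natDegree_prod_of_monic _ _ fun a _ => (monic_X_sub_C a).pow _] at this
  simpa using this

end Stepanov

theorem ZMod.natCast_choose_ne_zero {p : ℕ} [hp : Fact p.Prime] {N t : ℕ} (hN : N < p)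
    (ht : t ≤ N) : (N.choose t : ZMod p) ≠ 0 := by
  rw [Ne, ZMod.natCast_eq_zero_iff, ← hp.out.coprime_iff_not_dvd]
  exact Nat.Prime.coprime_choose_of_lt hp.out hN ht

theorem biUnion_image_add_mul_eq_erase {R : Type*} [Ring R] [DecidableEq R] {A B G : Finset R}
    {lam : R} (hAB : A * B = G.image (· - lam) \ {0}) :
    A.biUnion (fun a => B.image fun b => lam + a * b) = G.erase lam := by
  ext x
  have hx : x ∈ A.biUnion (fun a => B.image fun b => lam + a * b) ↔ x - lam ∈ A * B := by
    simp [mem_mul, eq_sub_iff_add_eq, add_comm]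
  rw [hx, hAB]
  simp [sub_eq_zero, and_comm]

theorem disjoint_image_add_mul {α : Type*} [Add α] [Mul α] [IsLeftCancelAdd α] [DecidableEq α]
    {A B : Finset α} (hinj : (A ×ˢ B : Set (α × α)).InjOn fun p => p.1 * p.2) (lam : α)
    {a₁ a₂ : α} (ha₁ : a₁ ∈ A) (ha₂ : a₂ ∈ A) (hne : a₁ ≠ a₂) :
    Disjoint (B.image fun b => lam + a₁ * b) (B.image fun b => lam + a₂ * b) := by
  refine disjoint_left.2 fun x hx₁ hx₂ => hne ?_
  obtain ⟨b₁, hb₁, rfl⟩ := mem_image.1 hx₁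
  obtain ⟨b₂, hb₂, hb⟩ := mem_image.1 hx₂
  exact congrArg Prod.fst <| hinj (Set.mk_mem_prod ha₁ hb₁) (Set.mk_mem_prod ha₂ hb₂)
    (add_left_cancel hb).symm

theorem stmt_8_general (p : ℕ) [Fact p.Prime]
    (G : Finset (ZMod p)) (hG0 : (0 : ZMod p) ∉ G) (hG1 : (1 : ZMod p) ∈ G)
    (hGmul : ∀ x ∈ G, ∀ y ∈ G, x * y ∈ G)
    (hGproper : ∃ x : ZMod p, x ≠ 0 ∧ x ∉ G)
    (lam : ZMod p) (hlam : lam ∈ G)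
    (A B : Finset (ZMod p)) (hA0 : (0 : ZMod p) ∉ A) (hB0 : (0 : ZMod p) ∉ B)
    (hA : 2 ≤ A.card) (hB : 2 ≤ B.card)
    (hAB : A * B = (G.image (fun g => g - lam)) \ {0}) :
    A.card * B.card = G.card - 1 ∧
    (A * B).card = A.card * B.card ∧
    (∀ a₁ ∈ A, ∀ a₂ ∈ A, a₁ ≠ a₂ →
      Disjoint (B.image (fun b => lam + a₁ * b)) (B.image (fun b => lam + a₂ * b))) ∧
    A.biUnion (fun a => B.image (fun b => lam + a * b)) = G.erase lam := by
  obtain ⟨x, hx0, hxG⟩ := hGproper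
  obtain ⟨a₀, ha₀⟩ := card_pos.1 (by omega : 0 < #A)
  have hcardAB : #(A * B) = #G - 1 := by
    rw [hAB, card_sdiff_of_subset (by simpa [sub_eq_zero] using hlam), card_singleton,
      card_image_of_injective _ sub_left_injective]
  have hBG : #B ≤ #G - 1 := hcardAB ▸
    card_le_card_mul_left_of_injective ha₀ (mul_right_injective₀ (ne_of_mem_of_not_mem ha₀ hA0))
  have hGp : 2 * #G ≤ p - 1 := by
    simpa [ZMod.card] using two_mul_card_le_of_mul_mem hG0 hG1 hGmul hx0 hxG
  have hpow : ∀ a ∈ insert 0 A, ∀ b ∈ B, (b * a + lam) ^ #G = 1 := by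
    refine fun a ha b hb => pow_card_eq_one_of_mul_mem hG0 hGmul ?_
    rcases mem_insert.1 ha with rfl | ha
    · simpa using hlam
    · have := mem_sdiff.1 (hAB ▸ mul_mem_mul ha hb)
      obtain ⟨g, hg, hga⟩ := mem_image.1 this.1
      rwa [mul_comm, ← hga, sub_add_cancel]
  -- `hGp` and `hBG` give `|G| + |B| - 1 < p`, so the binomial coefficient is nonzero mod `p`.
  have hstep := card_mul_card_le_of_pow_eq_one (fun f hf => sum_eval_basis_mul_eval hf 0) hB0
    (card_pos.1 (by omega)) (ne_of_mem_of_not_mem hlam hG0)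
    (ZMod.natCast_choose_ne_zero (by omega) (by omega)) hpow
  rw [card_insert_of_notMem hA0, add_one_mul] at hstep
  have hcard : #A * #B = #G - 1 := le_antisymm (by omega) (hcardAB ▸ card_mul_le)
  have hinj := card_mul_iff.1 (hcardAB.trans hcard.symm)
  exact ⟨hcard, hcardAB.trans hcard.symm,
    fun a₁ ha₁ a₂ ha₂ => disjoint_image_add_mul hinj lam ha₁ ha₂, biUnion_image_add_mul_eq_erase hAB⟩

/-- if `G ⊊ F_p^*` is a multiplicative subgroup, `λ ∈ G`, and
`A, B ⊆ F_p^*` with `|A|,|B| ≥ 2` satisfy `AB = (G - λ) \ {0}`, then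
`|A||B| = |G| - 1`; in particular `|AB| = |A||B|` and `G \ {λ}` is the
disjoint union of the translates `λ + aB`, `a ∈ A`. -/
theorem stmt_8 (p : ℕ) [Fact p.Prime] (hodd : Odd p)
    (G : Finset (ZMod p)) (hG0 : (0 : ZMod p) ∉ G) (hG1 : (1 : ZMod p) ∈ G)
    (hGmul : ∀ x ∈ G, ∀ y ∈ G, x * y ∈ G)
    (hGproper : ∃ x : ZMod p, x ≠ 0 ∧ x ∉ G)
    (lam : ZMod p) (hlam : lam ∈ G)
    (A B : Finset (ZMod p)) (hA0 : (0 : ZMod p) ∉ A) (hB0 : (0 : ZMod p) ∉ B)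
    (hA : 2 ≤ A.card) (hB : 2 ≤ B.card)
    (hAB : A * B = (G.image (fun g => g - lam)) \ {0}) :
    A.card * B.card = G.card - 1 ∧
    (A * B).card = A.card * B.card ∧
    (∀ a₁ ∈ A, ∀ a₂ ∈ A, a₁ ≠ a₂ →
      Disjoint (B.image (fun b => lam + a₁ * b)) (B.image (fun b => lam + a₂ * b))) ∧
    A.biUnion (fun a => B.image (fun b => lam + a * b)) = G.erase lam :=
  stmt_8_general p G hG0 hG1 hGmul hGproper lam hlam A B hA0 hB0 hA hB hAB
end

section
/- Let n ≥ 2, let ω = e^{2πi/n}, and set x_k = ω^k - 1 for 1 ≤ k ≤ n-1. If x_k x_ℓ = x_m x_r for some indices 1 ≤ k, ℓ, m, r ≤ n-1, then {k, ℓ} = {m, r} as unordered pairs. -/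
/-!
With `a = πk/n` etc., `x_k = ω^k - 1 = 2i sin a e^{ia}`, so `x_k x_ℓ = -4 sin a sin b e^{i(a+b)}` is in
polar form with positive modulus `4 sin a sin b`. Equal products therefore have equal angle sums (these
lie in `(0, 2π)`) and equal sine products. By `2 sin a sin b = cos(a-b) - cos(a+b)` the latter gives
`cos(a-b) = cos(c-d)`, hence `|a-b| = |c-d|` as both lie in `[0, π]`; sum and distance determine the pair.
-/

open Complex Set

lemma exp_two_mul_mul_I_sub_one (θ : ℂ) :
    exp (2 * θ * I) - 1 = 2 * I * sin θ * exp (θ * I) := by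
  have hinv : exp (-θ * I) * exp (θ * I) = 1 := by rw [← exp_add]; simp
  rw [sin, show 2 * θ * I = θ * I + θ * I by ring, exp_add]
  linear_combination hinv + (exp (θ * I) ^ 2 - exp (-θ * I) * exp (θ * I)) * I_mul_I

lemma eq_and_exp_eq_of_ofReal_mul_exp_mul_I_eq {r s θ φ : ℝ} (hr : 0 < r) (hs : 0 < s)
    (h : (r : ℂ) * exp (θ * I) = s * exp (φ * I)) :
    r = s ∧ exp (θ * I) = exp (φ * I) := by
  have hrs : r = s := by
    simpa [abs_of_pos hr, abs_of_pos hs] using congrArg (‖·‖) h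
  subst hrs
  exact ⟨rfl, mul_left_cancel₀ (ofReal_ne_zero.mpr hr.ne') h⟩

lemma eq_of_exp_mul_I_eq {θ φ : ℝ} (hθ : θ ∈ Ico 0 (2 * Real.pi)) (hφ : φ ∈ Ico 0 (2 * Real.pi))
    (h : exp (θ * I) = exp (φ * I)) : θ = φ :=
  Circle.exp_injOn_Ico (by simp) hθ hφ (Circle.ext (by simpa using h))

lemma eq_or_eq_of_add_eq_of_sin_mul_sin_eq {α β γ δ : ℝ}
    (hα : α ∈ Icc 0 Real.pi) (hβ : β ∈ Icc 0 Real.pi) (hγ : γ ∈ Icc 0 Real.pi) (hδ : δ ∈ Icc 0 Real.pi)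
    (hsum : α + β = γ + δ) (hsin : Real.sin α * Real.sin β = Real.sin γ * Real.sin δ) :
    (α = γ ∧ β = δ) ∨ (α = δ ∧ β = γ) := by
  have hcos : Real.cos |α - β| = Real.cos |γ - δ| := by
    rw [Real.cos_abs, Real.cos_abs]
    linear_combination Real.two_mul_sin_mul_sin γ δ - Real.two_mul_sin_mul_sin α β + 2 * hsin
      + congrArg Real.cos hsum
  obtain ⟨hα0, hαπ⟩ := hα
  obtain ⟨hβ0, hβπ⟩ := hβ
  obtain ⟨hγ0, hγπ⟩ := hγ
  obtain ⟨hδ0, hδπ⟩ := hδ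
  have habs : |α - β| = |γ - δ| :=
    Real.injOn_cos ⟨abs_nonneg _, abs_le.mpr ⟨by linarith, by linarith⟩⟩
      ⟨abs_nonneg _, abs_le.mpr ⟨by linarith, by linarith⟩⟩ hcos
  rcases abs_eq_abs.mp habs with hdiff | hdiff
  · exact .inl ⟨by linarith, by linarith⟩
  · exact .inr ⟨by linarith, by linarith⟩

theorem eq_or_eq_of_exp_sub_one_mul_eq {α β γ δ : ℝ}
    (hα : α ∈ Ioo 0 Real.pi) (hβ : β ∈ Ioo 0 Real.pi) (hγ : γ ∈ Ioo 0 Real.pi) (hδ : δ ∈ Ioo 0 Real.pi)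
    (h : (exp (2 * α * I) - 1) * (exp (2 * β * I) - 1) =
      (exp (2 * γ * I) - 1) * (exp (2 * δ * I) - 1)) :
    (α = γ ∧ β = δ) ∨ (α = δ ∧ β = γ) := by
  have hpos : ∀ {t}, t ∈ Ioo 0 Real.pi → 0 < Real.sin t := fun ht ↦
    Real.sin_pos_of_pos_of_lt_pi ht.1 ht.2
  have hpolar : ((Real.sin α * Real.sin β : ℝ) : ℂ) * exp ((α + β : ℝ) * I) =
      ((Real.sin γ * Real.sin δ : ℝ) : ℂ) * exp ((γ + δ : ℝ) * I) := by
    simp only [exp_two_mul_mul_I_sub_one, ← ofReal_sin] at h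
    simp only [ofReal_mul, ofReal_add, add_mul, exp_add]
    linear_combination (-1 / 4 : ℂ) * h +
      (Real.sin α * Real.sin β * exp (α * I) * exp (β * I) -
        Real.sin γ * Real.sin δ * exp (γ * I) * exp (δ * I)) * I_mul_I
  obtain ⟨hsin, hexp⟩ := eq_and_exp_eq_of_ofReal_mul_exp_mul_I_eq
    (mul_pos (hpos hα) (hpos hβ)) (mul_pos (hpos hγ) (hpos hδ)) hpolar
  have hsum : α + β = γ + δ :=
    eq_of_exp_mul_I_eq ⟨by linarith [hα.1, hβ.1], by linarith [hα.2, hβ.2]⟩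
      ⟨by linarith [hγ.1, hδ.1], by linarith [hγ.2, hδ.2]⟩ hexp
  exact eq_or_eq_of_add_eq_of_sin_mul_sin_eq (Ioo_subset_Icc_self hα) (Ioo_subset_Icc_self hβ)
    (Ioo_subset_Icc_self hγ) (Ioo_subset_Icc_self hδ) hsum hsin

lemma exp_two_pi_mul_I_div_pow (n t : ℕ) :
    exp (2 * Real.pi * I / n) ^ t = exp (2 * ((Real.pi * t / n : ℝ) : ℂ) * I) := by
  rw [← exp_nat_mul]
  push_cast
  ring_nf

lemma pi_mul_div_mem_Ioo {n t : ℕ} (ht : 0 < t) (htn : t < n) :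
    Real.pi * t / n ∈ Ioo 0 Real.pi := by
  have hn : (0 : ℝ) < n := by exact_mod_cast ht.trans htn
  refine ⟨by positivity, (div_lt_iff₀ hn).mpr ?_⟩
  exact mul_lt_mul_of_pos_left (by exact_mod_cast htn) Real.pi_pos

theorem stmt_12_general (n : ℕ) (k l m r : ℕ)
    (hk1 : 1 ≤ k) (hk2 : k ≤ n - 1) (hl1 : 1 ≤ l) (hl2 : l ≤ n - 1)
    (hm1 : 1 ≤ m) (hm2 : m ≤ n - 1) (hr1 : 1 ≤ r) (hr2 : r ≤ n - 1)
    (h : (Complex.exp (2 * Real.pi * Complex.I / n) ^ k - 1) *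
          (Complex.exp (2 * Real.pi * Complex.I / n) ^ l - 1) =
        (Complex.exp (2 * Real.pi * Complex.I / n) ^ m - 1) *
          (Complex.exp (2 * Real.pi * Complex.I / n) ^ r - 1)) :
    (k = m ∧ l = r) ∨ (k = r ∧ l = m) := by
  have hn0 : (n : ℝ) ≠ 0 := by exact_mod_cast (show n ≠ 0 by omega)
  have hinj : ∀ a b : ℕ, Real.pi * a / n = Real.pi * b / n → a = b := fun a b hab ↦ by
    exact_mod_cast mul_left_cancel₀ Real.pi_ne_zero ((div_left_inj' hn0).mp hab)
  simp only [exp_two_pi_mul_I_div_pow] at h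
  rcases eq_or_eq_of_exp_sub_one_mul_eq (pi_mul_div_mem_Ioo hk1 (by omega))
    (pi_mul_div_mem_Ioo hl1 (by omega)) (pi_mul_div_mem_Ioo hm1 (by omega))
    (pi_mul_div_mem_Ioo hr1 (by omega)) h with ⟨h1, h2⟩ | ⟨h1, h2⟩
  · exact .inl ⟨hinj _ _ h1, hinj _ _ h2⟩
  · exact .inr ⟨hinj _ _ h1, hinj _ _ h2⟩

/-- with `ω = e^{2πi/n}` and `x_k = ω^k - 1`, if
`x_k x_ℓ = x_m x_r` for `1 ≤ k,ℓ,m,r ≤ n-1` then `{k,ℓ} = {m,r}`. -/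
theorem stmt_12 (n : ℕ) (hn : 2 ≤ n) (k l m r : ℕ)
    (hk1 : 1 ≤ k) (hk2 : k ≤ n - 1) (hl1 : 1 ≤ l) (hl2 : l ≤ n - 1)
    (hm1 : 1 ≤ m) (hm2 : m ≤ n - 1) (hr1 : 1 ≤ r) (hr2 : r ≤ n - 1)
    (h : (Complex.exp (2 * Real.pi * Complex.I / n) ^ k - 1) *
          (Complex.exp (2 * Real.pi * Complex.I / n) ^ l - 1) =
        (Complex.exp (2 * Real.pi * Complex.I / n) ^ m - 1) *
          (Complex.exp (2 * Real.pi * Complex.I / n) ^ r - 1)) :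
    (k = m ∧ l = r) ∨ (k = r ∧ l = m) :=
  stmt_12_general n k l m r hk1 hk2 hl1 hl2 hm1 hm2 hr1 hr2 h
end

section
/- Let G be a finite subgroup of the unit circle S^1 ⊂ ℂ^* and let λ ∈ G. Then there do not exist sets A, B ⊆ ℂ^* with |A| ≥ 2 and |B| ≥ 2 such that AB = (G - λ) \ {0}. -/
/-!
Inverting in the unit circle straightens things out: for `‖g‖ = ‖λ‖ = 1` and `g ≠ λ`, the point
`λ / (g - λ)` lies on the line `Re w = -1/2`. So if `AB ⊆ (G - λ) \ {0}`, then all products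
`(λ / a) * b⁻¹` lie on one line missing the origin, and a product set of two sets with at least
two elements each never lies on such a line.
-/

open Pointwise ComplexConjugate

namespace Complex

theorem re_div_sub_eq_neg_half {g l : ℂ} (hg : ‖g‖ = 1) (hl : ‖l‖ = 1) (hne : g ≠ l) :
    (l / (g - l)).re = -1 / 2 := by
  have hg0 : g ≠ 0 := norm_ne_zero_iff.mp (by rw [hg]; exact one_ne_zero)
  have hl0 : l ≠ 0 := norm_ne_zero_iff.mp (by rw [hl]; exact one_ne_zero)
  have hsub : g - l ≠ 0 := sub_ne_zero.mpr hne
  -- on the unit circle `conj = inv`, so `conj (l / (g - l)) = g / (l - g)`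
  have hsum : l / (g - l) + conj (l / (g - l)) = -1 := by
    rw [map_div₀, map_sub, ← inv_eq_conj hg, ← inv_eq_conj hl]
    field_simp
    ring
  have := congrArg re hsum
  rw [add_conj] at this
  simp only [ofReal_re, neg_re, one_re] at this
  linarith

theorem eq_or_eq_of_re_mul_eq {x₁ x₂ b₁ b₂ : ℂ} {c : ℝ} (hc : c ≠ 0)
    (h₁₁ : (x₁ * b₁).re = c) (h₁₂ : (x₁ * b₂).re = c)
    (h₂₁ : (x₂ * b₁).re = c) (h₂₂ : (x₂ * b₂).re = c) :
    x₁ = x₂ ∨ b₁ = b₂ := by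
  have conj_eq : ∀ {x b : ℂ}, (x * b).re = c → x * b + conj x * conj b = 2 * c := by
    intro x b h
    rw [← map_mul, add_conj, h]
    push_cast
    ring
  have E₁₁ := conj_eq h₁₁
  have E₁₂ := conj_eq h₁₂
  have E₂₁ := conj_eq h₂₁
  have E₂₂ := conj_eq h₂₂
  rw [← sub_eq_zero, ← sub_eq_zero (a := b₁)]
  by_contra! ⟨hx, hb⟩
  -- `b₁` and `b₂` are both orthogonal to `x₁ - x₂ ≠ 0`, hence real multiples of each other
  have hreal : b₁ * conj b₂ = conj b₁ * b₂ := by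
    have h : (x₁ - x₂) * conj (x₁ - x₂) * (b₁ * conj b₂ - conj b₁ * b₂) = 0 := by
      rw [map_sub]
      linear_combination (conj x₁ - conj x₂) * conj b₂ * (E₁₁ - E₂₁)
        - (conj x₁ - conj x₂) * conj b₁ * (E₁₂ - E₂₂)
    rw [mul_conj, mul_eq_zero, sub_eq_zero] at h
    exact h.resolve_left (by exact_mod_cast (normSq_pos.mpr hx).ne')
  have h : (2 * c : ℂ) * ((b₁ - b₂) * conj (b₁ - b₂)) = 0 := by
    rw [map_sub]
    linear_combination (conj b₁ * (b₁ - b₂)) * (E₁₁ - E₁₂)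
      - ((b₁ - b₂) * (conj b₁ - conj b₂)) * E₁₁ - (x₁ * (b₁ - b₂)) * hreal
  rw [mul_conj] at h
  norm_cast at h
  simp only [mul_eq_zero, OfNat.ofNat_ne_zero, hc, normSq_eq_zero, hb, or_self] at h

end Complex

theorem stmt_13_general (G : Set ℂ)
    (hGcirc : ∀ z ∈ G, ‖z‖ = 1)
    (lam : ℂ) (hlam : lam ∈ G) :
    ¬ ∃ A B : Set ℂ, (0 : ℂ) ∉ A ∧ (0 : ℂ) ∉ B ∧
        2 ≤ A.encard ∧ 2 ≤ B.encard ∧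
        A * B = {z : ℂ | ∃ g ∈ G, z = g - lam} \ {0} := by
  rintro ⟨A, B, -, -, hA, hB, hAB⟩
  obtain ⟨a₁, ha₁, a₂, ha₂, ha⟩ :=
    Set.one_lt_encard_iff_nontrivial.mp (lt_of_lt_of_le (by norm_num) hA)
  obtain ⟨b₁, hb₁, b₂, hb₂, hb⟩ :=
    Set.one_lt_encard_iff_nontrivial.mp (lt_of_lt_of_le (by norm_num) hB)
  have hlam0 : lam ≠ 0 := norm_ne_zero_iff.mp (by rw [hGcirc lam hlam]; exact one_ne_zero)
  have hline : ∀ a ∈ A, ∀ b ∈ B, (lam / a * b⁻¹).re = -1 / 2 := by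
    intro a ha b hb
    obtain ⟨⟨g, hg, hab⟩, hab0⟩ := hAB ▸ Set.mul_mem_mul ha hb
    have hne : g ≠ lam := fun h => hab0 (by rw [hab, h, sub_self]; rfl)
    rw [show lam / a * b⁻¹ = lam / (a * b) by ring, hab]
    exact Complex.re_div_sub_eq_neg_half (hGcirc g hg) (hGcirc lam hlam) hne
  rcases Complex.eq_or_eq_of_re_mul_eq (by norm_num) (hline a₁ ha₁ b₁ hb₁) (hline a₁ ha₁ b₂ hb₂)
      (hline a₂ ha₂ b₁ hb₁) (hline a₂ ha₂ b₂ hb₂) with h | h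
  · exact ha (inv_injective (mul_left_cancel₀ hlam0 h))
  · exact hb (inv_injective h)

/-- if `G` is a finite subgroup of the unit circle and `λ ∈ G`,
then `(G - λ) \ {0}` is not a nontrivial product set `AB`. -/
theorem stmt_13 (G : Set ℂ) (hGfin : G.Finite) (hG1 : (1 : ℂ) ∈ G)
    (hGmul : ∀ x ∈ G, ∀ y ∈ G, x * y ∈ G)
    (hGcirc : ∀ z ∈ G, ‖z‖ = 1)
    (lam : ℂ) (hlam : lam ∈ G) :
    ¬ ∃ A B : Set ℂ, (0 : ℂ) ∉ A ∧ (0 : ℂ) ∉ B ∧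
        2 ≤ A.encard ∧ 2 ≤ B.encard ∧
        A * B = {z : ℂ | ∃ g ∈ G, z = g - lam} \ {0} :=
  stmt_13_general G hGcirc lam hlam
end

section
/- Let G be a finite subgroup of S^1 with |G| ≥ 3 and let ξ, μ ∈ ℂ^*. Then for every A ⊆ ℂ^*, the ratio set A/A is not equal to (ξG + μ) \ {0}. -/
/-! If `S = (ξG + μ) \ {0}` is a ratio set, it is closed under `z ↦ z⁻¹`, so inversion pairs up
its points. If `0 ∉ ξG + μ`, dividing `(ξg + μ)(ξσg + μ) = 1` by `g` and summing over `G` (whose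
elements and inverses sum to zero) gives `∑ σg / g = -|G|`, which forces `σg = -g`; then `g²` is
constant on `G`, so `|G| ≤ 2`. If `ξg₀ + μ = 0`, then `S = c • (G \ {1} - 1)` with `c = ξg₀`.
Comparing `∑ z` with `∑ z⁻¹` over `S`, using `(h - 1)⁻¹ + (h⁻¹ - 1)⁻¹ = -1`, gives
`2|G|c² = |G| - 1`, while `1 ∈ S` puts `c` on the line `Re = -1/2`; so `c = -1/2` and `|G| = 2`. -/

open Pointwise

open Finset

theorem one_mem_div_self_of_ne_zero {α : Type*} [GroupWithZero α] {A : Set α} {z : α}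
    (hz : z ∈ A / A) (hz0 : z ≠ 0) : (1 : α) ∈ A / A := by
  obtain ⟨a, ha, b, -, rfl⟩ := hz
  exact ⟨a, ha, a, ha, div_self (div_ne_zero_iff.1 hz0).1⟩

namespace Finset

theorem sum_comp_inv_of_inv_mem {K M : Type*} [InvolutiveInv K] [AddCommMonoid M] {t : Finset K}
    (ht : ∀ x ∈ t, x⁻¹ ∈ t) (φ : K → M) : ∑ x ∈ t, φ x⁻¹ = ∑ x ∈ t, φ x :=
  sum_nbij' (·⁻¹) (·⁻¹) ht ht (fun x _ => inv_inv x) (fun x _ => inv_inv x) fun _ _ => rfl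

/-- A pairing `f i * f (σ i) = 1` with `f` injective forces `σ` to be an involution. -/
theorem sum_comp_eq_of_mul_eq_one {ι K M : Type*} [Monoid K] [AddCommMonoid M] {t : Finset ι}
    {f : ι → K} (hf : Set.InjOn f t) {σ : ι → ι} (hσ : ∀ i ∈ t, σ i ∈ t)
    (hpair : ∀ i ∈ t, f i * f (σ i) = 1) (φ : ι → M) :
    ∑ i ∈ t, φ (σ i) = ∑ i ∈ t, φ i := by
  have hinvol : ∀ i ∈ t, σ (σ i) = i := fun i hi =>
    hf (hσ _ (hσ i hi)) hi (left_inv_eq_right_inv (hpair i hi) (hpair _ (hσ i hi))).symm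
  exact sum_nbij' σ σ hσ hσ hinvol hinvol fun _ _ => rfl

theorem exists_mul_eq_one_of_inv_subset {ι K : Type*} [GroupWithZero K] {t : Finset ι}
    {f : ι → K} (hf : ∀ i ∈ t, f i ≠ 0)
    (hinv : {z | ∃ i ∈ t, z = f i}⁻¹ ⊆ {z | ∃ i ∈ t, z = f i}) :
    ∃ σ : ι → ι, (∀ i ∈ t, σ i ∈ t) ∧ ∀ i ∈ t, f i * f (σ i) = 1 := by
  have : ∀ i ∈ t, ∃ j ∈ t, f i * f j = 1 := fun i hi => by
    obtain ⟨j, hj, hfj⟩ := hinv (Set.inv_mem_inv.2 ⟨i, hi, rfl⟩)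
    exact ⟨j, hj, by rw [← hfj, mul_inv_cancel₀ (hf i hi)]⟩
  choose! σ hσ hpair using this
  exact ⟨σ, hσ, hpair⟩

theorem card_le_two_of_sq_eq {K : Type*} [Field K] {s : Finset K}
    (hsq : ∀ x ∈ s, ∀ y ∈ s, x ^ 2 = y ^ 2) : #s ≤ 2 := by
  classical
  rcases s.eq_empty_or_nonempty with rfl | ⟨a, ha⟩
  · simp
  have hsub : s ⊆ {a, -a} := fun x hx => by
    simpa using sq_eq_sq_iff_eq_or_eq_neg.1 (hsq x hx a ha)
  exact (card_le_card hsub).trans card_le_two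

section MulClosed

variable {G₀ : Type*} [GroupWithZero G₀] {s : Finset G₀}

theorem surjOn_mul_left_of_mul_mem (hmul : ∀ x ∈ s, ∀ y ∈ s, x * y ∈ s) (h0 : (0 : G₀) ∉ s)
    {g : G₀} (hg : g ∈ s) : Set.SurjOn (g * ·) s s :=
  surjOn_of_injOn_of_card_le _ (fun x hx => hmul g hg x hx)
    (mul_right_injective₀ (ne_of_mem_of_not_mem hg h0)).injOn le_rfl

theorem one_mem_of_mul_mem (hmul : ∀ x ∈ s, ∀ y ∈ s, x * y ∈ s) (h0 : (0 : G₀) ∉ s)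
    {g : G₀} (hg : g ∈ s) : (1 : G₀) ∈ s := by
  obtain ⟨x, hx, hgx⟩ := surjOn_mul_left_of_mul_mem hmul h0 hg hg
  rwa [← (mul_eq_left₀ (ne_of_mem_of_not_mem hg h0)).1 hgx]

theorem inv_mem_of_mul_mem (hmul : ∀ x ∈ s, ∀ y ∈ s, x * y ∈ s) (h0 : (0 : G₀) ∉ s)
    {g : G₀} (hg : g ∈ s) : g⁻¹ ∈ s := by
  obtain ⟨x, hx, hgx⟩ := surjOn_mul_left_of_mul_mem hmul h0 hg (one_mem_of_mul_mem hmul h0 hg)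
  rwa [← eq_inv_of_mul_eq_one_right hgx]

end MulClosed

section MulClosedField

variable {K : Type*} [Field K] {s : Finset K}

theorem sum_eq_zero_of_mul_mem (hmul : ∀ x ∈ s, ∀ y ∈ s, x * y ∈ s) (h0 : (0 : K) ∉ s)
    (hs : 1 < #s) : ∑ x ∈ s, x = 0 := by
  obtain ⟨e, he, he1⟩ := exists_mem_ne hs 1
  have hinj : Set.InjOn (e * ·) s := (mul_right_injective₀ (ne_of_mem_of_not_mem he h0)).injOn
  have hmul_sum : e * ∑ x ∈ s, x = ∑ x ∈ s, x := by
    rw [mul_sum]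
    exact sum_nbij (e * ·) (fun x hx => hmul e he x hx) hinj
      (surjOn_mul_left_of_mul_mem hmul h0 he) fun _ _ => rfl
  have : (e - 1) * ∑ x ∈ s, x = 0 := by rw [sub_mul, hmul_sum, one_mul, sub_self]
  exact (mul_eq_zero.1 this).resolve_left (sub_ne_zero.2 he1)

theorem two_mul_sum_erase_one_inv_sub_one [DecidableEq K] (hmul : ∀ x ∈ s, ∀ y ∈ s, x * y ∈ s)
    (h0 : (0 : K) ∉ s) : 2 * ∑ h ∈ s.erase 1, (h - 1)⁻¹ = -#(s.erase 1) := by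
  have hinv : ∀ h ∈ s.erase 1, h⁻¹ ∈ s.erase 1 := fun h hh =>
    mem_erase.2 ⟨inv_ne_one.2 (ne_of_mem_erase hh), inv_mem_of_mul_mem hmul h0 (mem_of_mem_erase hh)⟩
  rw [two_mul]
  nth_rewrite 1 [← sum_comp_inv_of_inv_mem hinv]
  rw [← sum_add_distrib, ← nsmul_one, ← sum_const, ← sum_neg_distrib]
  refine sum_congr rfl fun h hh => ?_
  have hh0 : h ≠ 0 := ne_of_mem_of_not_mem (mem_of_mem_erase hh) h0
  have hh1 : h - 1 ≠ 0 := sub_ne_zero.2 (ne_of_mem_erase hh)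
  have hh1' : 1 - h ≠ 0 := sub_ne_zero.2 (ne_of_mem_erase hh).symm
  field_simp
  ring

/-- Dividing the pairing identity by `g` and summing, only the ratio terms `σ g / g` survive. -/
theorem sum_mul_inv_eq_neg_card_of_affine_pairing (hmul : ∀ x ∈ s, ∀ y ∈ s, x * y ∈ s)
    (h0 : (0 : K) ∉ s) (hs : 1 < #s) {ξ μ : K} (hξ : ξ ≠ 0) (hμ : μ ≠ 0) {σ : K → K}
    (hσ : ∀ g ∈ s, σ g ∈ s) (hpair : ∀ g ∈ s, (ξ * g + μ) * (ξ * σ g + μ) = 1) :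
    ∑ g ∈ s, σ g * g⁻¹ = -#s := by
  have hinj : Set.InjOn (fun g => ξ * g + μ) s := fun _ _ _ _ h =>
    mul_left_cancel₀ hξ (add_right_cancel h)
  have hsum : ∑ g ∈ s, g = 0 := sum_eq_zero_of_mul_mem hmul h0 hs
  have hsumσ : ∑ g ∈ s, σ g = 0 := (sum_comp_eq_of_mul_eq_one hinj hσ hpair id).trans hsum
  have hsuminv : ∑ g ∈ s, g⁻¹ = 0 :=
    (sum_comp_inv_of_inv_mem (fun _ hg => inv_mem_of_mul_mem hmul h0 hg) id).trans hsum
  have key : ξ * μ * ∑ g ∈ s, (σ g * g⁻¹ + 1) =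
      -(ξ ^ 2 * ∑ g ∈ s, σ g + (μ ^ 2 - 1) * ∑ g ∈ s, g⁻¹) := by
    simp only [mul_sum, ← sum_add_distrib, ← sum_neg_distrib]
    refine sum_congr rfl fun g hg => ?_
    have hg0 : g ≠ 0 := ne_of_mem_of_not_mem hg h0
    field_simp
    linear_combination hpair g hg
  rw [hsumσ, hsuminv, mul_zero, mul_zero, add_zero, neg_zero] at key
  have := (mul_eq_zero.1 key).resolve_left (mul_ne_zero hξ hμ)
  rw [sum_add_distrib, sum_const, nsmul_one] at this
  linear_combination this

theorem two_mul_card_mul_sq_eq_of_sum_inv_eq_sum [DecidableEq K]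
    (hmul : ∀ x ∈ s, ∀ y ∈ s, x * y ∈ s) (h0 : (0 : K) ∉ s) (hs : 1 < #s) {c : K} (hc0 : c ≠ 0)
    (hself : ∑ h ∈ s.erase 1, (c * (h - 1))⁻¹ = ∑ h ∈ s.erase 1, c * (h - 1)) :
    2 * #s * c ^ 2 = #s - 1 := by
  obtain ⟨g, hg⟩ := card_pos.1 (by omega : 0 < #s)
  have h1s : (1 : K) ∈ s := one_mem_of_mul_mem hmul h0 hg
  have hcard1 : ((#(s.erase 1) : ℕ) : K) = #s - 1 := by
    rw [card_erase_of_mem h1s, Nat.cast_sub (by omega), Nat.cast_one]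
  have hlin : ∑ h ∈ s.erase 1, c * (h - 1) = -#s * c := by
    rw [← mul_sum, sum_sub_distrib, sum_erase_eq_sub h1s, sum_eq_zero_of_mul_mem hmul h0 hs,
      sum_const, nsmul_one, hcard1]
    ring
  have hrec : 2 * ∑ h ∈ s.erase 1, (c * (h - 1))⁻¹ = -(#s - 1) * c⁻¹ := by
    simp only [mul_inv, ← mul_sum]
    rw [mul_left_comm, two_mul_sum_erase_one_inv_sub_one hmul h0, hcard1]
    ring
  rw [hself, hlin] at hrec
  field_simp at hrec
  linear_combination -hrec

end MulClosedField

end Finset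

namespace Complex

theorem eq_one_of_sum_eq_card {ι : Type*} {t : Finset ι} {z : ι → ℂ} (hz : ∀ i ∈ t, ‖z i‖ ≤ 1)
    (hsum : ∑ i ∈ t, z i = #t) : ∀ i ∈ t, z i = 1 := by
  have hre_le : ∀ i ∈ t, (z i).re ≤ 1 := fun i hi => (re_le_norm (z i)).trans (hz i hi)
  have hdefect : ∑ i ∈ t, (1 - (z i).re) = 0 := by
    rw [sum_sub_distrib, ← re_sum, hsum]
    simp
  intro i hi
  have hre : (z i).re = 1 := by
    linarith [(sum_eq_zero_iff_of_nonneg fun i hi => sub_nonneg.2 (hre_le i hi)).1 hdefect i hi]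
  have hnormSq : normSq (z i) ≤ 1 := by
    rw [normSq_eq_norm_sq]
    exact pow_le_one₀ (norm_nonneg _) (hz i hi)
  rw [normSq_apply, hre] at hnormSq
  exact ext hre (mul_self_eq_zero.1 (le_antisymm (by linarith) (mul_self_nonneg _)))

theorem re_inv_sub_one {z : ℂ} (hz : ‖z‖ = 1) (hz1 : z ≠ 1) : ((z - 1)⁻¹).re = -1 / 2 := by
  have hnormSq : z.re * z.re + z.im * z.im = 1 := by
    rw [← normSq_apply, normSq_eq_norm_sq, hz, one_pow]
  have hne : normSq (z - 1) ≠ 0 := normSq_eq_zero.not.2 (sub_ne_zero.2 hz1)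
  have hval : normSq (z - 1) = 2 * (1 - z.re) := by
    rw [normSq_apply, sub_re, sub_im, one_re, one_im]
    linear_combination hnormSq
  have hre : 1 - z.re ≠ 0 := right_ne_zero_of_mul (hval ▸ hne)
  rw [inv_re, hval, sub_re, one_re]
  field_simp
  ring

end Complex

theorem setOf_affine_sdiff_zero_eq {K : Type*} [Field K] [DecidableEq K] {s : Finset K}
    (hmul : ∀ x ∈ s, ∀ y ∈ s, x * y ∈ s) (h0 : (0 : K) ∉ s) {ξ μ g₀ : K} (hξ : ξ ≠ 0)
    (hg₀ : g₀ ∈ s) (hμ : ξ * g₀ + μ = 0) :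
    {z | ∃ g ∈ s, z = ξ * g + μ} \ {0} = {z | ∃ h ∈ s.erase 1, z = ξ * g₀ * (h - 1)} := by
  have hg₀0 : g₀ ≠ 0 := ne_of_mem_of_not_mem hg₀ h0
  ext z
  constructor
  · rintro ⟨⟨g, hg, rfl⟩, hz⟩
    refine ⟨g₀⁻¹ * g, mem_erase.2 ⟨fun h => hz ?_, hmul _ (inv_mem_of_mul_mem hmul h0 hg₀) _ hg⟩, ?_⟩
    · rw [inv_mul_eq_one₀ hg₀0] at h
      rw [← h, hμ]
      rfl
    · field_simp
      linear_combination hμ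
  · rintro ⟨h, hh, rfl⟩
    refine ⟨⟨g₀ * h, hmul _ hg₀ _ (mem_of_mem_erase hh), by linear_combination -hμ⟩, ?_⟩
    exact mul_ne_zero (mul_ne_zero hξ hg₀0) (sub_ne_zero.2 (ne_of_mem_erase hh))

theorem card_le_two_of_inv_subset_affine_image {s : Finset ℂ}
    (hmul : ∀ x ∈ s, ∀ y ∈ s, x * y ∈ s) (hcirc : ∀ z ∈ s, ‖z‖ = 1) {ξ μ : ℂ} (hξ : ξ ≠ 0)
    (hμ : μ ≠ 0) (hne : ∀ g ∈ s, ξ * g + μ ≠ 0)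
    (hinv : {z | ∃ g ∈ s, z = ξ * g + μ}⁻¹ ⊆ {z | ∃ g ∈ s, z = ξ * g + μ}) : #s ≤ 2 := by
  by_contra! hcard
  have h0 : (0 : ℂ) ∉ s := fun h => by simpa using hcirc 0 h
  obtain ⟨σ, hσ, hpair⟩ := exists_mul_eq_one_of_inv_subset hne hinv
  have hratio : ∑ g ∈ s, -(σ g * g⁻¹) = #s := by
    rw [sum_neg_distrib, sum_mul_inv_eq_neg_card_of_affine_pairing hmul h0 (by omega) hξ hμ hσ hpair,
      neg_neg]
  have hnorm : ∀ g ∈ s, ‖-(σ g * g⁻¹)‖ ≤ 1 := fun g hg => by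
    rw [norm_neg, norm_mul, norm_inv, hcirc _ (hσ g hg), hcirc g hg, inv_one, mul_one]
  have hneg : ∀ g ∈ s, σ g = -g := fun g hg => by
    have h1 := Complex.eq_one_of_sum_eq_card hnorm hratio g hg
    have hg0 : g ≠ 0 := ne_of_mem_of_not_mem hg h0
    field_simp at h1
    linear_combination -h1
  refine hcard.not_ge (card_le_two_of_sq_eq fun g hg g' hg' => ?_)
  have e := hpair g hg
  have e' := hpair g' hg'
  rw [hneg g hg] at e
  rw [hneg g' hg'] at e'
  exact mul_left_cancel₀ (pow_ne_zero 2 hξ) (by linear_combination e' - e)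

theorem card_le_two_of_inv_subset_image_sub_one {s : Finset ℂ}
    (hmul : ∀ x ∈ s, ∀ y ∈ s, x * y ∈ s) (hcirc : ∀ z ∈ s, ‖z‖ = 1) {c : ℂ}
    (hone : (1 : ℂ) ∈ {z | ∃ h ∈ s.erase 1, z = c * (h - 1)})
    (hinv : {z | ∃ h ∈ s.erase 1, z = c * (h - 1)}⁻¹ ⊆ {z | ∃ h ∈ s.erase 1, z = c * (h - 1)}) :
    #s ≤ 2 := by
  by_contra! hcard
  have h0 : (0 : ℂ) ∉ s := fun h => by simpa using hcirc 0 h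
  obtain ⟨h₁, hh₁, hc⟩ := hone
  have hc0 : c ≠ 0 := left_ne_zero_of_mul_eq_one hc.symm
  have hne : ∀ h ∈ s.erase 1, c * (h - 1) ≠ 0 := fun h hh =>
    mul_ne_zero hc0 (sub_ne_zero.2 (ne_of_mem_erase hh))
  have hinj : Set.InjOn (fun h => c * (h - 1)) (s.erase 1) := fun _ _ _ _ h =>
    sub_left_injective (mul_left_cancel₀ hc0 h)
  obtain ⟨τ, hτ, hpair⟩ := exists_mul_eq_one_of_inv_subset hne hinv
  have hcsq := two_mul_card_mul_sq_eq_of_sum_inv_eq_sum hmul h0 (by omega) hc0 <| by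
    rw [← sum_comp_eq_of_mul_eq_one hinj hτ hpair fun h => c * (h - 1)]
    exact sum_congr rfl fun h hh => inv_eq_of_mul_eq_one_right (hpair h hh)
  have hre : c.re = -1 / 2 := by
    rw [eq_inv_of_mul_eq_one_left hc.symm]
    exact Complex.re_inv_sub_one (hcirc h₁ (mem_of_mem_erase hh₁)) (ne_of_mem_erase hh₁)
  have him : c.im = 0 := by
    have := congrArg Complex.im hcsq
    simp only [pow_two, Complex.mul_im, Complex.mul_re, Complex.re_ofNat, Complex.natCast_re,
      Complex.im_ofNat, Complex.natCast_im, mul_zero, sub_zero, hre, zero_mul, add_zero,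
      Complex.sub_im, Complex.one_im, sub_self, mul_eq_zero, OfNat.ofNat_ne_zero, Nat.cast_eq_zero,
      card_eq_zero, ne_empty_of_mem (mem_of_mem_erase hh₁), or_self, false_or] at this
    linarith
  have hc : c = -1 / 2 := Complex.ext (by simp [hre]) (by simp [him])
  rw [hc] at hcsq
  have : (#s : ℂ) = 2 := by linear_combination -2 * hcsq
  have : #s = 2 := by exact_mod_cast this
  omega

theorem stmt_16_general (G : Set ℂ)
    (hGmul : ∀ x ∈ G, ∀ y ∈ G, x * y ∈ G)
    (hGcirc : ∀ z ∈ G, ‖z‖ = 1) (hGcard : 3 ≤ G.ncard)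
    (ξ μ : ℂ) (hξ : ξ ≠ 0) (hμ : μ ≠ 0)
    (A : Set ℂ) :
    A / A ≠ {z : ℂ | ∃ g ∈ G, z = ξ * g + μ} \ {0} := by
  intro hA
  obtain ⟨s, rfl⟩ := (Set.finite_of_ncard_pos (by omega : 0 < G.ncard)).exists_finset_coe
  rw [Set.ncard_coe_finset] at hGcard
  simp only [mem_coe] at hA hGmul hGcirc
  have h0 : (0 : ℂ) ∉ s := fun h => by simpa using hGcirc 0 h
  have hinv := (hA ▸ inv_div A A).le
  by_cases hzero : ∃ g₀ ∈ s, ξ * g₀ + μ = 0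
  · obtain ⟨g₀, hg₀, hg₀μ⟩ := hzero
    obtain ⟨g, hg, hgg₀⟩ := exists_mem_ne (by omega : 1 < #s) g₀
    have hg0 : ξ * g + μ ≠ 0 := by
      rw [show ξ * g + μ = ξ * (g - g₀) by linear_combination hg₀μ]
      exact mul_ne_zero hξ (sub_ne_zero.2 hgg₀)
    have hone : (1 : ℂ) ∈ A / A :=
      one_mem_div_self_of_ne_zero (by rw [hA]; exact ⟨⟨g, hg, rfl⟩, hg0⟩) hg0
    rw [hA] at hone
    rw [setOf_affine_sdiff_zero_eq hGmul h0 hξ hg₀ hg₀μ] at hone hinv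
    exact (card_le_two_of_inv_subset_image_sub_one hGmul hGcirc hone hinv).not_gt hGcard
  · push Not at hzero
    rw [Set.sdiff_singleton_eq_self (by rintro ⟨g, hg, hz⟩; exact hzero g hg hz.symm)] at hinv
    exact (card_le_two_of_inv_subset_affine_image hGmul hGcirc hξ hμ hzero hinv).not_gt hGcard

/-- for a finite subgroup `G` of the unit circle with `|G| ≥ 3`
and `ξ, μ ∈ ℂ^*`, no ratio set `A/A` equals `(ξG + μ) \ {0}`. -/
theorem stmt_16 (G : Set ℂ) (hGfin : G.Finite) (hG1 : (1 : ℂ) ∈ G)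
    (hGmul : ∀ x ∈ G, ∀ y ∈ G, x * y ∈ G)
    (hGcirc : ∀ z ∈ G, ‖z‖ = 1) (hGcard : 3 ≤ G.ncard)
    (ξ μ : ℂ) (hξ : ξ ≠ 0) (hμ : μ ≠ 0)
    (A : Set ℂ) (hA0 : (0 : ℂ) ∉ A) :
    A / A ≠ {z : ℂ | ∃ g ∈ G, z = ξ * g + μ} \ {0} :=
  stmt_16_general G hGmul hGcirc hGcard ξ μ hξ hμ A
end

section
/- Let p be an odd prime, G a proper multiplicative subgroup of F_p with |G| ≥ 3, and ξ, μ ∈ F_p^*. Then for every A ⊆ F_p^*, the ratio set A/A is not equal to (ξG + μ) \ {0}. -/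
/-!
Let `n = |G|` and `T = ξG + μ`. Then `T` consists of `n` roots of `P = (X - μ)ⁿ - ξⁿ`. If
`A / A = T \ {0}`, then `1 ∈ T` and `T \ {0}` is closed under inversion, so `P` divides
`X · Xⁿ P(1/X)` with a linear quotient `aX + b`. Comparing coefficients: if `a = P(0) ≠ 0`, then
`b = 0` and `μ² = 1`, which forces `ξⁿ = 0`; if `a = 0`, the coefficients of degrees `1, 2, 3, n`
give `(n - 3)(n + 1) = 0`, impossible for `4 ≤ n ≤ p - 2`, while for `n = 3` the relation
`(1 - μ)³ = ξ³` coming from `1 ∈ T` gives `3 = 4`.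
-/

open Finset Pointwise Polynomial

theorem pow_card_eq_one_of_mul_mem_s17 {M : Type*} [CommGroupWithZero M] {G : Finset M}
    (hG0 : (0 : M) ∉ G) (hGmul : ∀ x ∈ G, ∀ y ∈ G, x * y ∈ G) {g : M} (hg : g ∈ G) :
    g ^ #G = 1 := by
  classical
  have hg0 : g ≠ 0 := ne_of_mem_of_not_mem hg hG0
  have himage : G.image (g * ·) = G :=
    eq_of_subset_of_card_le (image_subset_iff.mpr fun x hx => hGmul g hg x hx)
      (card_image_of_injective _ (mul_right_injective₀ hg0)).ge
  have hprod : ∏ x ∈ G, x = g ^ #G * ∏ x ∈ G, x := by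
    conv_lhs => rw [← himage, prod_image fun x _ y _ h => mul_left_cancel₀ hg0 h]
    rw [prod_mul_distrib, prod_const]
  have hprod0 : ∏ x ∈ G, x ≠ 0 := prod_ne_zero_iff.mpr fun x hx h => hG0 (h ▸ hx)
  exact (mul_eq_right₀ hprod0).mp hprod.symm

theorem Finset.card_add_two_le_card {α : Type*} [Fintype α] [DecidableEq α] {s : Finset α}
    {x y : α} (hxy : x ≠ y) (hx : x ∉ s) (hy : y ∉ s) : #s + 2 ≤ Fintype.card α := by
  have := card_le_univ (insert x (insert y s))
  rwa [card_insert_of_notMem (by simp [hxy, hx]), card_insert_of_notMem hy] at this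

theorem Finset.inv_mem_div_self {α : Type*} [DivisionMonoid α] [DecidableEq α] {A : Finset α}
    {t : α} (ht : t ∈ A / A) : t⁻¹ ∈ A / A := by
  rw [← inv_div]
  exact inv_mem_inv ht

theorem Finset.one_mem_div_self_of_ne_zero {G₀ : Type*} [GroupWithZero G₀] [DecidableEq G₀]
    {A : Finset G₀} {t : G₀} (ht : t ∈ A / A) (ht0 : t ≠ 0) : (1 : G₀) ∈ A / A := by
  obtain ⟨a, ha, b, -, rfl⟩ := mem_div.mp ht
  simpa [div_self (div_ne_zero_iff.mp ht0).1] using div_mem_div ha ha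

theorem Nat.cast_choose_two_mul (K : Type*) [CommRing K] (n : ℕ) :
    (n.choose 2 : K) * 2 = n * (n - 1) := by
  rw [← Nat.cast_descFactorial_two, Nat.descFactorial_eq_factorial_mul_choose, Nat.factorial_two,
    Nat.cast_mul, Nat.cast_two, mul_comm]

theorem Nat.cast_choose_three_mul (K : Type*) [CommRing K] (n : ℕ) :
    (n.choose 3 : K) * 6 = n * (n - 1) * (n - 2) := by
  rcases lt_or_ge n 2 with hn | hn
  · interval_cases n <;> simp [Nat.choose_eq_zero_of_lt]
  have h := congrArg (Nat.cast : ℕ → K) (Nat.choose_succ_right_eq n 2)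
  push_cast [Nat.cast_sub hn] at h
  linear_combination 2 * h + (n - 2 : K) * Nat.cast_choose_two_mul K n

namespace Polynomial

section CommRing

variable {R : Type*} [CommRing R]

theorem coeff_mul_C_mul_X_add_C_zero (P : R[X]) (a b : R) :
    (P * (C a * X + C b)).coeff 0 = b * P.coeff 0 := by
  rw [mul_add, coeff_add, ← mul_assoc, coeff_mul_X_zero, coeff_mul_C, zero_add, mul_comm]

theorem coeff_mul_C_mul_X_add_C_succ (P : R[X]) (a b : R) (k : ℕ) :
    (P * (C a * X + C b)).coeff (k + 1) = a * P.coeff k + b * P.coeff (k + 1) := by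
  rw [mul_add, coeff_add, ← mul_assoc, mul_comm P, mul_assoc, coeff_C_mul, coeff_mul_X,
    coeff_mul_C, mul_comm _ b]

theorem coeff_zero_eq_zero_of_X_mul_reflect_eq {P : R[X]} {n : ℕ} {a b : R}
    (h : X * reflect n P = P * (C a * X + C b)) : b * P.coeff 0 = 0 := by
  rw [← coeff_mul_C_mul_X_add_C_zero, ← h, coeff_X_mul_zero]

theorem coeff_eq_of_X_mul_reflect_eq {P : R[X]} {n : ℕ} {a b : R}
    (h : X * reflect n P = P * (C a * X + C b)) {i k : ℕ} (hik : i + k = n) :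
    P.coeff i = a * P.coeff k + b * P.coeff (k + 1) := by
  rw [← coeff_mul_C_mul_X_add_C_succ, ← h, coeff_X_mul, coeff_reflect, revAt_le (by omega),
    show n - k = i by omega]

theorem coeff_X_add_C_pow_sub_C_zero (c d : R) (n : ℕ) :
    ((X + C c) ^ n - C d).coeff 0 = c ^ n - d := by
  rw [coeff_sub, coeff_X_add_C_pow, coeff_C_zero, Nat.choose_zero_right, Nat.cast_one, mul_one,
    Nat.sub_zero]

theorem coeff_X_add_C_pow_sub_C_of_ne_zero (c d : R) (n : ℕ) {k : ℕ} (hk : k ≠ 0) :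
    ((X + C c) ^ n - C d).coeff k = c ^ (n - k) * n.choose k := by
  rw [coeff_sub, coeff_X_add_C_pow, coeff_C, if_neg hk, sub_zero]

theorem coeff_X_add_C_pow_sub_C_of_add_eq (c d : R) {n i k : ℕ} (hk : k ≠ 0) (h : i + k = n) :
    ((X + C c) ^ n - C d).coeff k = c ^ i * n.choose i := by
  rw [coeff_X_add_C_pow_sub_C_of_ne_zero c d n hk, Nat.choose_symm_of_eq_add h.symm,
    show n - k = i by omega]

theorem natDegree_X_add_C_pow_sub_C [Nontrivial R] (c d : R) (n : ℕ) :
    ((X + C c) ^ n - C d).natDegree = n := by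
  rw [natDegree_sub_C, natDegree_pow_X_add_C]

theorem monic_X_add_C_pow_sub_C [Nontrivial R] (c d : R) {n : ℕ} (hn : n ≠ 0) :
    ((X + C c) ^ n - C d).Monic :=
  ((monic_X_add_C c).pow n).sub_of_left
    (degree_lt_degree (by rw [natDegree_C, natDegree_pow_X_add_C]; omega))

theorem Monic.exists_X_mul_reflect_eq_of_dvd {P : R[X]} (hP : P.Monic) {n : ℕ}
    (hPn : P.natDegree = n) (hdvd : P ∣ X * reflect n P) :
    ∃ a b : R, X * reflect n P = P * (C a * X + C b) := by
  obtain ⟨q, hq⟩ := hdvd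
  have hq1 : q.natDegree ≤ 1 := by
    rcases eq_or_ne q 0 with rfl | hq0
    · simp
    have hdeg : (X * reflect n P).natDegree ≤ 1 + n :=
      natDegree_mul_le.trans (add_le_add natDegree_X_le
        (natDegree_reflect_le.trans_eq (by rw [hPn, max_self])))
    rw [hq, hP.natDegree_mul' hq0, hPn] at hdeg
    omega
  exact ⟨q.coeff 1, q.coeff 0, hq.trans (congrArg _ (eq_X_add_C_of_natDegree_le_one hq1))⟩

/-- The coefficients of degrees `n + 1, 0, 1, n, 2, 3` of the identity `h`. -/
theorem coeff_relations_of_X_mul_reflect_eq {n : ℕ} (hn : 3 ≤ n) {c d a b : R}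
    (h : X * reflect n ((X + C c) ^ n - C d) = ((X + C c) ^ n - C d) * (C a * X + C b)) :
    c ^ n - d = a ∧ b * a = 0 ∧ 1 = a * a + b * (c ^ (n - 1) * n) ∧
      c ^ (n - 1) * n = a * (c * n) + b ∧
      c * n = a * (c ^ (n - 1) * n) + b * (c ^ (n - 2) * n.choose 2) ∧
      c ^ 2 * n.choose 2 = a * (c ^ (n - 2) * n.choose 2) + b * (c ^ (n - 3) * n.choose 3) := by
  have hrel {i k : ℕ} (hik : i + k = n) := coeff_eq_of_X_mul_reflect_eq h hik
  have hP {i k : ℕ} (hk : k ≠ 0) (h : i + k = n) := coeff_X_add_C_pow_sub_C_of_add_eq c d hk h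
  have hP₀ := coeff_X_add_C_pow_sub_C_zero c d n
  have hP₁ := coeff_X_add_C_pow_sub_C_of_ne_zero c d n one_ne_zero
  have hP₂ := coeff_X_add_C_pow_sub_C_of_ne_zero c d n two_ne_zero
  have hP₃ := coeff_X_add_C_pow_sub_C_of_ne_zero c d n three_ne_zero
  have hb := coeff_zero_eq_zero_of_X_mul_reflect_eq h
  have ha := hrel (i := 0) (k := n) (zero_add n)
  have e0 := hrel (i := n) (k := 0) (add_zero n)
  have e1 := hrel (i := 1) (k := n - 1) (by omega)
  have e2 := hrel (i := n - 1) (k := 1) (by omega)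
  have e3 := hrel (i := n - 2) (k := 2) (by omega)
  rw [hP₀, hP (i := 0) (k := n) (by omega) (by omega),
    coeff_X_add_C_pow_sub_C_of_ne_zero c d n (k := n + 1) (by omega), Nat.choose_succ_self] at ha
  rw [hP (i := 0) (k := n) (by omega) (by omega), hP₀, zero_add, hP₁] at e0
  rw [hP (i := 1) (k := n - 1) (by omega) (by omega),
    hP (i := 0) (k := n - 1 + 1) (by omega) (by omega), hP₁] at e1
  rw [hP (i := 1) (k := n - 1) (by omega) (by omega), hP₁, hP₂] at e2
  rw [hP (i := 2) (k := n - 2) (by omega) (by omega), hP₂, hP₃] at e3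
  rw [hP₀] at hb
  simp only [pow_zero, pow_one, Nat.choose_zero_right, Nat.choose_one_right, Nat.cast_zero,
    Nat.cast_one, mul_zero, mul_one, add_zero] at ha e0 e1 e2 e3
  rw [ha] at hb e0
  exact ⟨ha, hb, e0, e1, e2, e3⟩

end CommRing

section IsDomain

variable {R : Type*} [CommRing R] [IsDomain R]

theorem Monic.dvd_of_eval_eq_zero {P H : R[X]} (hP : P.Monic) {S : Finset R}
    (hS : P.natDegree ≤ #S) (hPS : ∀ s ∈ S, P.eval s = 0) (hHS : ∀ s ∈ S, H.eval s = 0) :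
    P ∣ H := by
  rcases eq_or_ne P 1 with rfl | hP1
  · exact one_dvd H
  rw [← modByMonic_eq_zero_iff_dvd hP]
  refine eq_zero_of_natDegree_lt_card_of_eval_eq_zero' _ S (fun s hs => ?_)
    ((natDegree_modByMonic_lt H hP hP1).trans_le hS)
  have := congrArg (eval s) (modByMonic_add_div H P)
  rwa [eval_add, eval_mul, hPS s hs, zero_mul, add_zero, hHS s hs] at this

end IsDomain

theorem eval_reflect_eq_zero {K : Type*} [Field K] {f : K[X]} {N : ℕ} (hf : f.natDegree ≤ N)
    {t : K} (ht : t ≠ 0) (h : f.eval t⁻¹ = 0) : (reflect N f).eval t = 0 := by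
  let _ := invertibleOfNonzero (inv_ne_zero ht)
  have := (eval₂_reflect_eq_zero_iff (RingHom.id K) t⁻¹ N f hf).mpr h
  rwa [invOf_eq_inv, inv_inv] at this

end Polynomial

section Field

variable {K : Type*} [Field K]

theorem pow_eq_zero_of_coeff_relations {n : ℕ} (hn : 2 ≤ n) {c ξ a : K} (hc : c ≠ 0)
    (hn0 : (n : K) ≠ 0) (hB₂ : (n.choose 2 : K) ≠ 0) (ha : c ^ n - ξ ^ n = a) (e0 : 1 = a * a)
    (e1 : c ^ (n - 1) * n = a * (c * n))
    (e3 : c ^ 2 * n.choose 2 = a * (c ^ (n - 2) * n.choose 2)) : ξ ^ n = 0 := by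
  have h1 : c ^ (n - 1) = c ^ (n - 2) * c := by rw [← pow_succ]; congr 1; omega
  have h0 : c ^ n = c ^ (n - 2) * c ^ 2 := by rw [← pow_add]; congr 1; omega
  have hwa : c ^ (n - 2) = a :=
    mul_right_cancel₀ (mul_ne_zero hc hn0) (by linear_combination e1 - (n : K) * h1)
  have hc2 : c ^ 2 = 1 :=
    mul_right_cancel₀ hB₂ (by linear_combination e3 + (n.choose 2 : K) * (a * hwa - e0))
  linear_combination h0 - ha + c ^ (n - 2) * hc2 + hwa

theorem three_eq_four_of_coeff_relations {c ξ b : K} (hc : c ≠ 0) (h3 : (3 : K) ≠ 0)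
    (hE : (1 + c) ^ 3 = ξ ^ 3) (ha : c ^ 3 - ξ ^ 3 = 0) (e1 : c ^ 2 * 3 = b)
    (e2 : c * 3 = b * (c * 3)) : (3 : K) = 4 := by
  have hb : b = 1 := (mul_eq_right₀ (mul_ne_zero hc h3)).mp e2.symm
  have hc3 : 3 * c = -2 := by linear_combination hE - ha - e1 - hb
  linear_combination -3 * e1 - 3 * hb + (3 * c - 2) * hc3

theorem cast_sub_three_mul_cast_add_one_eq_zero_of_coeff_relations {n : ℕ} (hn : 3 ≤ n)
    {c b : K} (hc : c ≠ 0) (hn0 : (n : K) ≠ 0) (hn1 : (n : K) - 1 ≠ 0) (h2 : (2 : K) ≠ 0)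
    (e0 : 1 = b * (c ^ (n - 1) * n)) (e1 : c ^ (n - 1) * n = b)
    (e2 : c * n = b * (c ^ (n - 2) * n.choose 2))
    (e3 : c ^ 2 * n.choose 2 = b * (c ^ (n - 3) * n.choose 3)) :
    ((n : K) - 3) * (n + 1) = 0 := by
  set w := c ^ (n - 3)
  set B₂ : K := ((n.choose 2 : ℕ) : K)
  set B₃ : K := ((n.choose 3 : ℕ) : K)
  have hw : w ≠ 0 := pow_ne_zero _ hc
  have hc1 : c ^ (n - 1) = w * c ^ 2 := by rw [← pow_add]; congr 1; omega
  have hc2 : c ^ (n - 2) = w * c := by rw [← pow_succ]; congr 1; omega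
  rw [hc1] at e0 e1
  rw [hc2] at e2
  subst e1
  have hB₂ : B₂ * w ^ 2 * c ^ 2 = 1 :=
    mul_left_cancel₀ (mul_ne_zero hc hn0) (by linear_combination -e2)
  have hB₂B₃ : B₂ = n * B₃ * w ^ 2 :=
    mul_left_cancel₀ (pow_ne_zero 2 hc) (by linear_combination e3)
  have hsq : (n : K) ^ 2 * c ^ 2 = B₂ :=
    mul_left_cancel₀ (mul_ne_zero (pow_ne_zero 2 hw) (pow_ne_zero 2 hc))
      (by linear_combination -e0 - hB₂)
  have hcube : B₂ ^ 3 = n ^ 3 * B₃ := by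
    linear_combination B₂ ^ 2 * hB₂B₃ + (n * B₃) * (-B₂ * w ^ 2 * hsq + n ^ 2 * hB₂)
  have hkey : (2 * n ^ 3 * (n - 1)) * (((n : K) - 3) * (n + 1)) = (2 * n ^ 3 * (n - 1)) * 0 := by
    linear_combination -48 * hcube - 8 * (n : K) ^ 3 * Nat.cast_choose_three_mul K n
      + 6 * ((n : K) ^ 2 * (n - 1) ^ 2 + 2 * n * (n - 1) * B₂ + 4 * B₂ ^ 2) *
        Nat.cast_choose_two_mul K n
  exact mul_left_cancel₀ (mul_ne_zero (mul_ne_zero h2 (pow_ne_zero 3 hn0)) hn1) hkey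

theorem X_add_C_pow_sub_C_not_dvd_X_mul_reflect {n : ℕ} (hn : 3 ≤ n)
    (hchar : ∀ m : ℕ, 0 < m → m ≤ n + 1 → (m : K) ≠ 0) {c ξ : K} (hc : c ≠ 0) (hξ : ξ ≠ 0)
    (hE : (1 + c) ^ n = ξ ^ n) :
    ¬ (X + C c) ^ n - C (ξ ^ n) ∣ X * reflect n ((X + C c) ^ n - C (ξ ^ n)) := by
  intro hdvd
  obtain ⟨a, b, h⟩ := (monic_X_add_C_pow_sub_C c (ξ ^ n) (by omega)).exists_X_mul_reflect_eq_of_dvd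
      (natDegree_X_add_C_pow_sub_C c _ n) hdvd
  obtain ⟨ha, hb, e0, e1, e2, e3⟩ := coeff_relations_of_X_mul_reflect_eq hn h
  have hn0 : (n : K) ≠ 0 := hchar n (by omega) (by omega)
  have hn1 : (n : K) - 1 ≠ 0 := by
    simpa [Nat.cast_sub (by omega : 1 ≤ n)] using hchar (n - 1) (by omega) (by omega)
  rcases eq_or_ne a 0 with rfl | ha0
  · simp only [zero_mul, zero_add] at e0 e1 e2 e3
    rcases hn.eq_or_lt with rfl | hn4
    · have h3 : (3 : K) ≠ 0 := by exact_mod_cast hchar 3 (by norm_num) (by norm_num)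
      rw [show Nat.choose 3 2 = 3 from rfl] at e2
      simp only [Nat.reduceSub, pow_one, Nat.cast_ofNat] at e1 e2
      have := three_eq_four_of_coeff_relations hc h3 hE ha e1 e2
      exact one_ne_zero (by linear_combination -this)
    · rcases mul_eq_zero.mp (cast_sub_three_mul_cast_add_one_eq_zero_of_coeff_relations hn hc hn0
        hn1 (by exact_mod_cast hchar 2 (by norm_num) (by omega)) e0 e1 e2 e3) with h | h
      · exact hchar (n - 3) (by omega) (by omega) (by push_cast [Nat.cast_sub hn]; exact h)
      · exact hchar (n + 1) (by omega) le_rfl (by push_cast; exact h)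
  · obtain rfl : b = 0 := (mul_eq_zero.mp hb).resolve_right ha0
    simp only [zero_mul, add_zero] at e0 e1 e3
    have hB₂ : (n.choose 2 : K) ≠ 0 :=
      left_ne_zero_of_mul (by rw [Nat.cast_choose_two_mul]; exact mul_ne_zero hn0 hn1)
    exact hξ (pow_eq_zero_iff (by omega) |>.mp
      (pow_eq_zero_of_coeff_relations (by omega) hc hn0 hB₂ ha e0 e1 e3))

theorem exists_inv_notMem_of_add_pow_eq {n : ℕ} (hn : 3 ≤ n)
    (hchar : ∀ m : ℕ, 0 < m → m ≤ n + 1 → (m : K) ≠ 0) {c ξ : K} (hc : c ≠ 0) (hξ : ξ ≠ 0)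
    {T : Finset K} (hT : n ≤ #T) (hroot : ∀ t ∈ T, (t + c) ^ n = ξ ^ n) (h1 : 1 ∈ T) :
    ∃ t ∈ T, t ≠ 0 ∧ t⁻¹ ∉ T := by
  by_contra! hinv
  have hdeg := natDegree_X_add_C_pow_sub_C c (ξ ^ n) n
  have hP (t : K) (ht : t ∈ T) : ((X + C c) ^ n - C (ξ ^ n)).eval t = 0 := by
    simp [hroot t ht]
  refine X_add_C_pow_sub_C_not_dvd_X_mul_reflect hn hchar hc hξ (hroot 1 h1)
    ((monic_X_add_C_pow_sub_C c _ (by omega)).dvd_of_eval_eq_zero (hdeg.trans_le hT) hP ?_)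
  intro t ht
  rcases eq_or_ne t 0 with rfl | ht0
  · simp
  · rw [eval_mul, eval_reflect_eq_zero hdeg.le ht0 (hP _ (hinv t ht ht0)), mul_zero]

end Field

theorem stmt_17_general (p : ℕ) [Fact p.Prime]
    (G : Finset (ZMod p)) (hG0 : (0 : ZMod p) ∉ G)
    (hGmul : ∀ x ∈ G, ∀ y ∈ G, x * y ∈ G)
    (hGproper : ∃ x : ZMod p, x ≠ 0 ∧ x ∉ G) (hGcard : 3 ≤ G.card)
    (ξ μ : ZMod p) (hξ : ξ ≠ 0) (hμ : μ ≠ 0)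
    (A : Finset (ZMod p)) :
    A / A ≠ (G.image (fun g => ξ * g + μ)) \ {0} := by
  intro hAeq
  set T := G.image (fun g => ξ * g + μ)
  have hT : #T = #G :=
    card_image_of_injective _ fun x y h => mul_left_cancel₀ hξ (add_right_cancel h)
  have hp : #G + 2 ≤ p := by
    obtain ⟨x, hx0, hxG⟩ := hGproper
    simpa using card_add_two_le_card hx0 hxG hG0
  have hchar (m : ℕ) (hm : 0 < m) (hmG : m ≤ #G + 1) : (m : ZMod p) ≠ 0 := by
    rw [Ne, ZMod.natCast_eq_zero_iff]
    exact fun h => absurd (Nat.le_of_dvd hm h) (by omega)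
  have hroot (t : ZMod p) (ht : t ∈ T) : (t + -μ) ^ #G = ξ ^ #G := by
    obtain ⟨g, hg, rfl⟩ := mem_image.mp ht
    rw [add_neg_cancel_right, mul_pow, pow_card_eq_one_of_mul_mem_s17 hG0 hGmul hg, mul_one]
  have hmem (t : ZMod p) : t ∈ A / A ↔ t ∈ T ∧ t ≠ 0 := by
    rw [hAeq, mem_sdiff, mem_singleton]
  obtain ⟨t, ht, ht0⟩ := exists_mem_ne (by omega : 1 < #T) 0
  have h1 : (1 : ZMod p) ∈ T :=
    ((hmem 1).mp (one_mem_div_self_of_ne_zero ((hmem t).mpr ⟨ht, ht0⟩) ht0)).1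
  obtain ⟨s, hs, hs0, hsinv⟩ :=
    exists_inv_notMem_of_add_pow_eq hGcard hchar (neg_ne_zero.mpr hμ) hξ hT.ge hroot h1
  exact hsinv ((hmem _).mp (inv_mem_div_self ((hmem s).mpr ⟨hs, hs0⟩))).1

/-- Theorem 1.9(1): for an odd prime `p`, a proper
multiplicative subgroup `G` of `F_p` with `|G| ≥ 3`, and `ξ, μ ∈ F_p^*`,
no ratio set `A/A` equals `(ξG + μ) \ {0}`. -/
theorem stmt_17 (p : ℕ) [Fact p.Prime] (hodd : Odd p)
    (G : Finset (ZMod p)) (hG0 : (0 : ZMod p) ∉ G) (hG1 : (1 : ZMod p) ∈ G)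
    (hGmul : ∀ x ∈ G, ∀ y ∈ G, x * y ∈ G)
    (hGproper : ∃ x : ZMod p, x ≠ 0 ∧ x ∉ G) (hGcard : 3 ≤ G.card)
    (ξ μ : ZMod p) (hξ : ξ ≠ 0) (hμ : μ ≠ 0)
    (A : Finset (ZMod p)) (hA0 : (0 : ZMod p) ∉ A) :
    A / A ≠ (G.image (fun g => ξ * g + μ)) \ {0} :=
  stmt_17_general p G hG0 hGmul hGproper hGcard ξ μ hξ hμ A
end
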